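/- arXiv:2604.20562 — 5 statements merged into one kernel-verified Lean document; each statement's English description precedes it below -/
import Mathlib

section
/- Let P : ℝⁿ → [0, ∞) be a submetry. Then the fiber L = P⁻¹(0) is a closed convex subset of ℝⁿ, and P equals the distance function to L. -/
/-!
A submetry is 1-Lipschitz and reaches every fibre `P ⁻¹' {y}` from `x` within distance
`dist (P x) y`, so `P x` is the distance from `x` to the zero fibre `L`.

For convexity, let `x = a • p + b • q` with `p, q ∈ L` and suppose `P x = d > 0`. Lifting the
segment from `P x` to `P x + r` gives `z` with `‖z - x‖ ≤ r` and `P z = d + r`, hence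
`‖z - p‖, ‖z - q‖ ≥ d + r`. The identity
`a ‖z - p‖² + b ‖z - q‖² = ‖z - x‖² + a b ‖p - q‖²` then yields `d² + 2 d r ≤ a b ‖p - q‖²`,
which fails for large `r`.
-/

/-- `P` is a submetry: it maps every closed ball surjectively onto the
closed ball of the same radius around the image of the center. -/
def IsSubmetry {X Y : Type*} [MetricSpace X] [MetricSpace Y] (P : X → Y) : Prop :=
  ∀ (x : X) (r : ℝ), 0 ≤ r → P '' Metric.closedBall x r = Metric.closedBall (P x) r

open Metric

namespace IsSubmetry

variable {X Y : Type*} [MetricSpace X] [MetricSpace Y] {P : X → Y}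

theorem exists_dist_le (hP : IsSubmetry P) (x : X) (y : Y) :
    ∃ z, P z = y ∧ dist x z ≤ dist (P x) y := by
  have hy : y ∈ P '' closedBall x (dist (P x) y) := by
    rw [hP x _ dist_nonneg, mem_closedBall, dist_comm]
  obtain ⟨z, hz, rfl⟩ := hy
  exact ⟨z, rfl, by rw [dist_comm]; exact hz⟩

theorem dist_le (hP : IsSubmetry P) (x y : X) : dist (P x) (P y) ≤ dist x y := by
  have hy : P y ∈ closedBall (P x) (dist x y) := by
    rw [← hP x _ dist_nonneg]
    exact Set.mem_image_of_mem P (mem_closedBall'.mpr le_rfl)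
  rwa [mem_closedBall, dist_comm] at hy

theorem lipschitzWith (hP : IsSubmetry P) : LipschitzWith 1 P :=
  LipschitzWith.mk_one hP.dist_le

theorem dist_eq_infDist_preimage (hP : IsSubmetry P) (x : X) (y : Y) :
    dist (P x) y = infDist x (P ⁻¹' {y}) := by
  obtain ⟨z, hzy, hxz⟩ := hP.exists_dist_le x y
  refine le_antisymm ((le_infDist ⟨z, hzy⟩).mpr fun w hw => ?_) ?_
  · rw [← Set.mem_singleton_iff.mp hw]
    exact hP.dist_le x w
  · exact (infDist_le_dist_of_mem (show z ∈ P ⁻¹' {y} from hzy)).trans hxz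

end IsSubmetry

theorem mul_norm_sub_sq_add_mul_norm_sub_sq {E : Type*} [NormedAddCommGroup E]
    [InnerProductSpace ℝ E] (z p q : E) {a b : ℝ} (hab : a + b = 1) :
    a * ‖z - p‖ ^ 2 + b * ‖z - q‖ ^ 2 = ‖z - (a • p + b • q)‖ ^ 2 + a * b * ‖p - q‖ ^ 2 := by
  obtain rfl : b = 1 - a := by linarith
  have hz : z - (a • p + (1 - a) • q) = (z - q) - a • (p - q) := by
    rw [sub_smul, one_smul, smul_sub]; abel
  have hp : z - p = (z - q) - (p - q) := by abel
  rw [hz, hp]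
  generalize z - q = u
  generalize p - q = v
  rw [norm_sub_sq_real, norm_sub_sq_real, inner_smul_right, norm_smul, Real.norm_eq_abs, mul_pow,
    sq_abs]
  ring

theorem convex_setOf_le_of_forall_exists_add_le {E : Type*} [NormedAddCommGroup E]
    [InnerProductSpace ℝ E] {f : E → ℝ} (hf : LipschitzWith 1 f)
    (hup : ∀ x (r : ℝ), 0 ≤ r → ∃ z, dist z x ≤ r ∧ f x + r ≤ f z) (c : ℝ) :
    Convex ℝ {x | f x ≤ c} := by
  intro p hp q hq a b ha hb hab
  show f (a • p + b • q) ≤ c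
  by_contra! hx
  set x := a • p + b • q
  set d := f x - c with hd_def
  set C := a * b * ‖p - q‖ ^ 2
  have hd : 0 < d := sub_pos.mpr hx
  set r := C / (2 * d) + 1
  have hr : 2 * d * r = C + 2 * d := by simp only [r]; field_simp
  obtain ⟨z, hzx, hfz⟩ := hup x r (by positivity)
  have hfar : ∀ w : E, f w ≤ c → d + r ≤ ‖z - w‖ := fun w hw => by
    have hlip := hf.le_add_mul z w
    rw [NNReal.coe_one, one_mul] at hlip
    rw [← dist_eq_norm]
    linarith
  have hzp := hfar p hp
  have hzq := hfar q hq
  have hdr : 0 ≤ d + r := by positivity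
  have hsq : (d + r) ^ 2 ≤ r ^ 2 + C := calc
    (d + r) ^ 2 = a * (d + r) ^ 2 + b * (d + r) ^ 2 := by rw [← add_mul, hab, one_mul]
    _ ≤ a * ‖z - p‖ ^ 2 + b * ‖z - q‖ ^ 2 := by gcongr
    _ = ‖z - x‖ ^ 2 + C := mul_norm_sub_sq_add_mul_norm_sub_sq z p q hab
    _ ≤ r ^ 2 + C := by rw [← dist_eq_norm]; gcongr
  nlinarith

theorem submetry_Rn_onto_halfLine_general
    (n : ℕ)
    (P : EuclideanSpace ℝ (Fin n) → Set.Ici (0 : ℝ)) (hP : IsSubmetry P) :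
    IsClosed (P ⁻¹' {⟨0, Set.self_mem_Ici⟩}) ∧
    Convex ℝ (P ⁻¹' {⟨0, Set.self_mem_Ici⟩}) ∧
    ∀ x, (P x : ℝ) = Metric.infDist x (P ⁻¹' {⟨0, Set.self_mem_Ici⟩}) := by
  have hval : ∀ x, (P x : ℝ) = dist (P x) ⟨0, Set.self_mem_Ici⟩ := fun x => by
    rw [Subtype.dist_eq, Real.dist_eq, sub_zero, abs_of_nonneg (P x).2]
  have hzero : P ⁻¹' {⟨0, Set.self_mem_Ici⟩} = {x | (P x : ℝ) ≤ 0} := by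
    ext x
    simp only [Set.mem_preimage, Set.mem_singleton_iff, Set.mem_ofPred_eq, Subtype.ext_iff]
    exact ⟨le_of_eq, fun h => le_antisymm h (P x).2⟩
  have hascent : ∀ x (r : ℝ), 0 ≤ r → ∃ z, dist z x ≤ r ∧ (P x : ℝ) + r ≤ P z := by
    intro x r hr
    obtain ⟨z, hz, hxz⟩ := hP.exists_dist_le x ⟨P x + r, add_nonneg (P x).2 hr⟩
    refine ⟨z, ?_, by rw [hz]⟩
    rw [dist_comm]
    simpa [Subtype.dist_eq, Real.dist_eq, abs_of_nonneg hr] using hxz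
  refine ⟨isClosed_singleton.preimage hP.lipschitzWith.continuous, ?_, fun x => ?_⟩
  · rw [hzero]
    exact convex_setOf_le_of_forall_exists_add_le (LipschitzWith.mk_one hP.dist_le) hascent 0
  · rw [hval, hP.dist_eq_infDist_preimage]

theorem submetry_Rn_onto_halfLine
    (n : ℕ) (hn : 1 ≤ n)
    (P : EuclideanSpace ℝ (Fin n) → Set.Ici (0 : ℝ)) (hP : IsSubmetry P) :
    IsClosed (P ⁻¹' {⟨0, Set.self_mem_Ici⟩}) ∧
    Convex ℝ (P ⁻¹' {⟨0, Set.self_mem_Ici⟩}) ∧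
    ∀ x, (P x : ℝ) = Metric.infDist x (P ⁻¹' {⟨0, Set.self_mem_Ici⟩}) :=
  submetry_Rn_onto_halfLine_general n P hP
end

section
/- Let L be a closed subset of ℝⁿ such that every point of ℝⁿ has a unique nearest point in L (i.e., L has infinite reach). Then L is convex. -/
open Metric Filter Topology
open scoped RealInnerProductSpace

set_option maxHeartbeats 1000000 in
/-- Motzkin's theorem: a closed subset of Euclidean space on which the
nearest-point projection is everywhere uniquely defined is convex. -/
theorem motzkin_unique_nearest_convex
    (n : ℕ) (L : Set (EuclideanSpace ℝ (Fin n))) (hclosed : IsClosed L)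
    (hunique : ∀ x : EuclideanSpace ℝ (Fin n),
      ∃! p, p ∈ L ∧ dist x p = Metric.infDist x L) :
    Convex ℝ L := by
  classical
  -- the nearest-point projection
  choose P hPmem hPdist using fun x : EuclideanSpace ℝ (Fin n) => (hunique x).exists
  have hPuniq : ∀ x q, q ∈ L → dist x q = infDist x L → q = P x := fun x q hq hd =>
    (hunique x).unique ⟨hq, hd⟩ ⟨hPmem x, hPdist x⟩
  have hLne : L.Nonempty := ⟨P 0, hPmem 0⟩
  -- F1 : affine minorants of φ(x) = ‖x‖² - d(x)²
  have hF1 : ∀ x : EuclideanSpace ℝ (Fin n), ∀ q ∈ L, 2 * ⟪x, q⟫ - ‖q‖ ^ 2 ≤ ‖x‖ ^ 2 - (infDist x L) ^ 2 := by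
    intro x q hq
    have h1 : infDist x L ≤ ‖x - q‖ := by
      rw [← dist_eq_norm]; exact infDist_le_dist_of_mem hq
    have h2 : (infDist x L) ^ 2 ≤ ‖x - q‖ ^ 2 := by
      have := infDist_nonneg (s := L) (x := x); nlinarith
    have h3 : ‖x - q‖ ^ 2 = ‖x‖ ^ 2 - 2 * ⟪x, q⟫ + ‖q‖ ^ 2 := norm_sub_sq_real x q
    nlinarith
  have hF2 : ∀ x : EuclideanSpace ℝ (Fin n), ‖x‖ ^ 2 - (infDist x L) ^ 2 = 2 * ⟪x, P x⟫ - ‖P x‖ ^ 2 := by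
    intro x
    have h1 : infDist x L = ‖x - P x‖ := by rw [← dist_eq_norm]; exact (hPdist x).symm
    have h3 : ‖x - P x‖ ^ 2 = ‖x‖ ^ 2 - 2 * ⟪x, P x⟫ + ‖P x‖ ^ 2 := norm_sub_sq_real x (P x)
    rw [h1, h3]; ring
  -- continuity of the projection
  have hPcont : ∀ x : EuclideanSpace ℝ (Fin n), ContinuousAt P x := by
    intro x
    rw [Metric.continuousAt_iff]
    by_contra hc
    push_neg at hc
    obtain ⟨ε, εpos, hbad⟩ := hc
    have hy : ∀ k : ℕ, ∃ y : EuclideanSpace ℝ (Fin n), dist y x < 1 / (k + 1) ∧ ε ≤ dist (P y) (P x) := by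
      intro k
      obtain ⟨y, hy1, hy2⟩ := hbad (1 / (k + 1)) (by positivity)
      exact ⟨y, hy1, hy2⟩
    choose y hy1 hy2 using hy
    have hyx : Tendsto y atTop (𝓝 x) := by
      rw [tendsto_iff_dist_tendsto_zero]
      refine squeeze_zero (fun k => dist_nonneg) (fun k => (hy1 k).le) ?_
      exact tendsto_one_div_add_atTop_nhds_zero_nat
    have hydist : ∀ k, dist x (P (y k)) ≤ infDist x L + 2 * dist (y k) x := by
      intro k
      have h1 : dist (y k) (P (y k)) = infDist (y k) L := hPdist (y k)
      have h2 : infDist (y k) L ≤ infDist x L + dist (y k) x := infDist_le_infDist_add_dist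
      have h3 : dist x (P (y k)) ≤ dist x (y k) + dist (y k) (P (y k)) := dist_triangle _ _ _
      rw [dist_comm x (y k)] at h3
      linarith
    set K := L ∩ closedBall x (infDist x L + 2) with hKdef
    have hKcomp : IsCompact K :=
      (isCompact_closedBall x (infDist x L + 2)).inter_left hclosed
    have hmemK : ∀ k, P (y k) ∈ K := by
      intro k
      refine ⟨hPmem (y k), ?_⟩
      rw [mem_closedBall, dist_comm]
      have := hydist k
      have h4 : dist (y k) x < 1 := lt_of_lt_of_le (hy1 k) (by
        rw [div_le_one (by positivity)]; exact le_add_of_nonneg_left (Nat.cast_nonneg k))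
      linarith
    obtain ⟨q, hqK, φ, hφmono, hconv⟩ := hKcomp.tendsto_subseq hmemK
    have hqL : q ∈ L := hqK.1
    have hφtop : Tendsto φ atTop atTop := hφmono.tendsto_atTop
    have hq_near : dist x q ≤ infDist x L := by
      have t1 : Tendsto (fun k => dist x (P (y (φ k)))) atTop (𝓝 (dist x q)) :=
        (Continuous.dist continuous_const continuous_id).continuousAt.tendsto.comp hconv
      have t2 : Tendsto (fun k => infDist x L + 2 * dist (y (φ k)) x) atTop
          (𝓝 (infDist x L + 2 * 0)) := by
        refine tendsto_const_nhds.add (Tendsto.const_mul 2 ?_)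
        have : Tendsto (fun k => dist (y k) x) atTop (𝓝 0) :=
          (tendsto_iff_dist_tendsto_zero).1 hyx
        exact this.comp hφtop
      rw [mul_zero, add_zero] at t2
      exact le_of_tendsto_of_tendsto' t1 t2 fun k => hydist (φ k)
    have hq_eq : q = P x :=
      hPuniq x q hqL (le_antisymm hq_near (infDist_le_dist_of_mem hqL))
    have : ε ≤ dist q (P x) := by
      have t1 : Tendsto (fun k => dist (P (y (φ k))) (P x)) atTop (𝓝 (dist q (P x))) :=
        (Continuous.dist continuous_id continuous_const).continuousAt.tendsto.comp hconv
      exact ge_of_tendsto t1 (Eventually.of_forall fun k => hy2 (φ k))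
    rw [hq_eq, dist_self] at this
    linarith
  -- main argument
  intro a ha b hb α β hα hβ hαβ
  set m : EuclideanSpace ℝ (Fin n) := α • a + β • b with hm
  set M : ℝ := α * ‖a‖ ^ 2 + β * ‖b‖ ^ 2 with hMdef
  have hMnn : 0 ≤ M := by positivity
  -- uniform lower bound coming from convex combination
  have hMbound : ∀ x : EuclideanSpace ℝ (Fin n), 2 * ⟪x, m⟫ - M ≤ ‖x‖ ^ 2 - (infDist x L) ^ 2 := by
    intro x
    have h1 := hF1 x a ha
    have h2 := hF1 x b hb
    have hinner : ⟪x, m⟫ = α * ⟪x, a⟫ + β * ⟪x, b⟫ := by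
      rw [hm, inner_add_right, real_inner_smul_right, real_inner_smul_right]
    nlinarith [mul_le_mul_of_nonneg_left h1 hα, mul_le_mul_of_nonneg_left h2 hβ]
  -- key estimate for each ε > 0
  have key : ∀ ε : ℝ, 0 < ε → infDist m L ≤ Real.sqrt (ε * M) := by
    intro ε εpos
    set F : EuclideanSpace ℝ (Fin n) → ℝ := fun x => (1 + ε) * ‖x‖ ^ 2 - (infDist x L) ^ 2 - 2 * ⟪x, m⟫ with hFdef
    have hFlow : ∀ x, ε * ‖x‖ ^ 2 - M ≤ F x := by
      intro x
      have := hMbound x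
      simp only [hFdef]
      nlinarith
    have hFcont : Continuous F := by
      refine Continuous.sub (Continuous.sub ?_ ?_) ?_
      · exact continuous_const.mul ((continuous_norm).pow 2)
      · exact ((continuous_infDist_pt L)).pow 2
      · exact continuous_const.mul (continuous_id.inner continuous_const)
    have hFcoer : Tendsto F (cocompact (EuclideanSpace ℝ (Fin n))) atTop := by
      have h1 : Tendsto (fun r : ℝ => ε * r ^ 2 - M) atTop atTop := by
        have h2 : Tendsto (fun r : ℝ => r ^ 2) atTop atTop := tendsto_pow_atTop two_ne_zero
        have h3 : Tendsto (fun r : ℝ => ε * r ^ 2) atTop atTop := h2.const_mul_atTop εpos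
        simpa [sub_eq_add_neg] using tendsto_atTop_add_const_right atTop (-M) h3
      exact tendsto_atTop_mono hFlow (h1.comp tendsto_norm_cocompact_atTop)
    obtain ⟨z, hzmin⟩ := hFcont.exists_forall_le hFcoer
    -- size bound on the minimizer
    have hzbound : ε * ‖z‖ ^ 2 ≤ M := by
      have h0 : F z ≤ F 0 := hzmin 0
      have hF0 : F 0 ≤ 0 := by
        simp only [hFdef]
        have := infDist_nonneg (s := L) (x := (0 : EuclideanSpace ℝ (Fin n)))
        simp only [norm_zero, inner_zero_left]
        nlinarith
      have := hFlow z
      linarith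
    -- master variational inequality
    have hstar : ∀ y : EuclideanSpace ℝ (Fin n),
        0 ≤ ε * (‖y‖ ^ 2 - ‖z‖ ^ 2) + 2 * ⟪y - z, P y⟫ - 2 * ⟪y - z, m⟫ := by
      intro y
      have hmin : F z ≤ F y := hzmin y
      have h2 := hF2 y
      have h1 := hF1 z (P y) (hPmem y)
      have e1 : ⟪y - z, P y⟫ = ⟪y, P y⟫ - ⟪z, P y⟫ := inner_sub_left _ _ _
      have e2 : ⟪y - z, m⟫ = ⟪y, m⟫ - ⟪z, m⟫ := inner_sub_left _ _ _
      simp only [hFdef] at hmin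
      nlinarith
    -- stationarity : P z = m - ε • z
    set p : EuclideanSpace ℝ (Fin n) := P z with hp
    set h : EuclideanSpace ℝ (Fin n) := m - p - ε • z with hh
    have hGnn : ∀ t : ℝ, 0 < t →
        0 ≤ 2 * ε * ⟪z, h⟫ + ε * t * ‖h‖ ^ 2 + 2 * ⟪h, P (z + t • h)⟫ - 2 * ⟪h, m⟫ := by
      intro t ht
      have hstar' := hstar (z + t • h)
      have e0 : z + t • h - z = t • h := by abel
      have e1 : ‖z + t • h‖ ^ 2 = ‖z‖ ^ 2 + 2 * (t * ⟪z, h⟫) + t ^ 2 * ‖h‖ ^ 2 := by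
        rw [norm_add_sq_real, real_inner_smul_right, norm_smul]
        simp only [Real.norm_eq_abs, mul_pow, sq_abs]
      have e2 : ⟪z + t • h - z, P (z + t • h)⟫ = t * ⟪h, P (z + t • h)⟫ := by
        rw [e0, real_inner_smul_left]
      have e3 : ⟪z + t • h - z, m⟫ = t * ⟪h, m⟫ := by
        rw [e0, real_inner_smul_left]
      rw [e1, e2, e3] at hstar'
      have ht' : 0 ≤ t * (2 * ε * ⟪z, h⟫ + ε * t * ‖h‖ ^ 2 + 2 * ⟪h, P (z + t • h)⟫
          - 2 * ⟪h, m⟫) := by nlinarith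
      exact nonneg_of_mul_nonneg_right ht' ht
    -- limit as t → 0⁺
    have hlim : Tendsto
        (fun t : ℝ => 2 * ε * ⟪z, h⟫ + ε * t * ‖h‖ ^ 2 + 2 * ⟪h, P (z + t • h)⟫
          - 2 * ⟪h, m⟫)
        (𝓝[>] (0 : ℝ))
        (𝓝 (2 * ε * ⟪z, h⟫ + ε * 0 * ‖h‖ ^ 2 + 2 * ⟪h, P z⟫ - 2 * ⟪h, m⟫)) := by
      have hc1 : Tendsto (fun t : ℝ => z + t • h) (𝓝 0) (𝓝 z) := by
        have : Continuous fun t : ℝ => z + t • h :=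
          continuous_const.add (continuous_id.smul continuous_const)
        have h0 := this.continuousAt (x := (0 : ℝ))
        simpa using h0.tendsto
      have hc2 : Tendsto (fun t : ℝ => P (z + t • h)) (𝓝 0) (𝓝 (P z)) :=
        (hPcont z).tendsto.comp hc1
      have hc3 : Tendsto (fun t : ℝ => 2 * ε * ⟪z, h⟫ + ε * t * ‖h‖ ^ 2
          + 2 * ⟪h, P (z + t • h)⟫ - 2 * ⟪h, m⟫) (𝓝 0)
          (𝓝 (2 * ε * ⟪z, h⟫ + ε * 0 * ‖h‖ ^ 2 + 2 * ⟪h, P z⟫ - 2 * ⟪h, m⟫)) := by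
        refine Tendsto.sub (Tendsto.add (Tendsto.add tendsto_const_nhds ?_) ?_) tendsto_const_nhds
        · exact ((tendsto_const_nhds.mul tendsto_id).mul tendsto_const_nhds)
        · exact Tendsto.const_mul 2 ((continuous_const.inner continuous_id).continuousAt.tendsto.comp hc2)
      exact hc3.mono_left nhdsWithin_le_nhds
    have hlim_nonneg : 0 ≤ 2 * ε * ⟪z, h⟫ + ε * 0 * ‖h‖ ^ 2 + 2 * ⟪h, P z⟫
        - 2 * ⟪h, m⟫ :=
      ge_of_tendsto hlim (eventually_mem_nhdsWithin.mono fun t ht => hGnn t ht)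
    have hval : 2 * ε * ⟪z, h⟫ + ε * 0 * ‖h‖ ^ 2 + 2 * ⟪h, P z⟫ - 2 * ⟪h, m⟫
        = -2 * ‖h‖ ^ 2 := by
      have e1 : ⟪h, m⟫ - ⟪h, P z⟫ - ε * ⟪h, z⟫ = ‖h‖ ^ 2 := by
        have e0 : ⟪h, m - P z - ε • z⟫ = ⟪h, m⟫ - ⟪h, P z⟫ - ε * ⟪h, z⟫ := by
          rw [inner_sub_right, inner_sub_right, real_inner_smul_right]
        have e0' : m - P z - ε • z = h := by rw [hh, hp]
        rw [← e0, e0', real_inner_self_eq_norm_sq]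
      have e2 : ⟪z, h⟫ = ⟪h, z⟫ := real_inner_comm _ _
      linear_combination (-2 : ℝ) * e1 + (2 * ε) * e2
    have hzero : h = 0 := by
      rw [hval] at hlim_nonneg
      have h1 : ‖h‖ ^ 2 ≤ 0 := by linarith
      have h2 : ‖h‖ ^ 2 = 0 := le_antisymm h1 (sq_nonneg _)
      have h3 : ‖h‖ = 0 := pow_eq_zero_iff two_ne_zero |>.mp h2
      exact norm_eq_zero.mp h3
    -- conclude the estimate
    have hpm : m - p = ε • z := by
      have := hzero
      rw [hh] at this
      have h2 : m - p = ε • z := by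
        have h3 : m - p - ε • z = 0 := this
        have := sub_eq_zero.mp h3
        exact this
      exact h2
    have hdist : infDist m L ≤ ε * ‖z‖ := by
      have h1 : infDist m L ≤ dist m p := infDist_le_dist_of_mem (hPmem z)
      rw [dist_eq_norm, hpm, norm_smul] at h1
      simpa [abs_of_pos εpos] using h1
    have hsq : (ε * ‖z‖) ^ 2 ≤ ε * M := by
      have : (ε * ‖z‖) ^ 2 = ε * (ε * ‖z‖ ^ 2) := by ring
      rw [this]
      exact mul_le_mul_of_nonneg_left hzbound εpos.le
    have : ε * ‖z‖ ≤ Real.sqrt (ε * M) := by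
      rw [Real.le_sqrt (by positivity) (by positivity)]
      exact hsq
    linarith
  -- let ε → 0
  have hzero : infDist m L = 0 := by
    by_contra hne
    have hpos : 0 < infDist m L := lt_of_le_of_ne (infDist_nonneg) (Ne.symm hne)
    set c := infDist m L with hc
    have hεpos : 0 < c ^ 2 / (2 * (M + 1)) := by positivity
    have h1 := key _ hεpos
    have h2 : Real.sqrt (c ^ 2 / (2 * (M + 1)) * M) < c := by
      rw [Real.sqrt_lt' hpos, div_mul_eq_mul_div, div_lt_iff₀ (by positivity)]
      nlinarith [mul_pos hpos hpos, hMnn]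
    linarith
  have : m ∈ L := by
    rw [hclosed.mem_iff_infDist_zero hLne]
    exact hzero
  exact this
end

section
/- There is no submetry with connected fibers from ℝⁿ (n ≥ 2) onto a circle S¹ (the quotient ℝ/aℤ with its length metric, a > 0). Equivalently: there is no surjective 1-Lipschitz map P : ℝⁿ → ℝ/aℤ with connected fibers such that dist(P(x), y) = dist(x, P⁻¹(y)) for all x and y. -/
/-!
A submetry `P` is 1-Lipschitz and open, hence a quotient map. Since `ℝⁿ` is simply connected,
`P` lifts through the covering `ℝ → ℝ/aℤ` to a continuous `F : ℝⁿ → ℝ`. On each fibre of `P`,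
`F` takes values in a discrete set of lifts of one point, so `F` is constant on the connected
fibres and descends along `P` to a continuous section of `ℝ → ℝ/aℤ`. No such section exists:
on `ℝ` it would be `t ↦ t + c`, which is not `a`-periodic.
-/

open Metric Function Topology

section Submetry

variable {X Y : Type*} [PseudoMetricSpace X] [PseudoMetricSpace Y] {P : X → Y}

theorem lipschitzWith_one_of_dist_eq_infDist
    (hP : ∀ x y, dist (P x) y = infDist x (P ⁻¹' {y})) : LipschitzWith 1 P :=
  LipschitzWith.of_dist_le_mul fun u v => by
    rw [NNReal.coe_one, one_mul, hP]
    exact infDist_le_dist_of_mem rfl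

theorem isOpenMap_of_dist_eq_infDist (hsurj : Surjective P)
    (hP : ∀ x y, dist (P x) y = infDist x (P ⁻¹' {y})) : IsOpenMap P := by
  intro U hU
  rw [Metric.isOpen_iff]
  rintro _ ⟨x, hxU, rfl⟩
  obtain ⟨r, hr, hball⟩ := Metric.isOpen_iff.1 hU x hxU
  refine ⟨r, hr, fun y hy => ?_⟩
  obtain ⟨z, hz⟩ := hsurj y
  rw [mem_ball', hP] at hy
  obtain ⟨w, rfl, hxw⟩ := (infDist_lt_iff ⟨z, hz⟩).1 hy
  exact ⟨w, hball (mem_ball'.2 hxw), rfl⟩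

end Submetry

namespace AddCircle

variable {a : ℝ}

theorem exists_continuous_lift {A : Type*} [TopologicalSpace A] [SimplyConnectedSpace A]
    [LocallyPathConnectedSpace A] {f : A → AddCircle a} (hf : Continuous f) :
    ∃ F : A → ℝ, Continuous F ∧ ∀ x, (F x : AddCircle a) = f x := by
  obtain ⟨x₀⟩ := (inferInstance : Nonempty A)
  obtain ⟨t₀, ht₀⟩ := QuotientAddGroup.mk_surjective (f x₀)
  obtain ⟨F, ⟨-, hF⟩, -⟩ :=
    (isCoveringMap_coe a).existsUnique_continuousMap_lifts ⟨f, hf⟩ x₀ t₀ ht₀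
  exact ⟨F, F.continuous, congrFun hF⟩

theorem not_exists_continuous_section (ha : a ≠ 0) :
    ¬ ∃ g : AddCircle a → ℝ, Continuous g ∧ ∀ y, (g y : AddCircle a) = y := by
  rintro ⟨g, hg, hgy⟩
  have hlin : (fun t : ℝ => g t) = fun t => t + g 0 :=
    (isCoveringMap_coe a).eq_of_comp_eq (hg.comp continuous_quotient_mk') (by fun_prop)
      (funext fun t => by simp [hgy]) 0 (by simp)
  have hperiod := congrFun hlin a
  rw [coe_period] at hperiod
  exact ha (by linarith)

end AddCircle

theorem not_exists_submetry_onto_addCircle {X : Type*} [PseudoMetricSpace X]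
    [SimplyConnectedSpace X] [LocallyPathConnectedSpace X] {a : ℝ} (ha : a ≠ 0) :
    ¬ ∃ P : X → AddCircle a, Surjective P ∧ (∀ y, IsConnected (P ⁻¹' {y})) ∧
      ∀ x y, dist (P x) y = infDist x (P ⁻¹' {y}) := by
  rintro ⟨P, hsurj, hconn, hP⟩
  have hPc : Continuous P := (lipschitzWith_one_of_dist_eq_infDist hP).continuous
  let Pc : C(X, AddCircle a) := ⟨P, hPc⟩
  have hquot : IsQuotientMap Pc :=
    (isOpenMap_of_dist_eq_infDist hsurj hP).isQuotientMap hPc hsurj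
  obtain ⟨F, hFc, hF⟩ := AddCircle.exists_continuous_lift hPc
  have hfib : FactorsThrough F Pc := fun x x' hxx' =>
    (AddCircle.isCoveringMap_coe a).constOn_of_comp (hconn (P x')).isPreconnected
      hFc.continuousOn (fun u hu u' hu' => by simp_all) hxx' rfl
  refine AddCircle.not_exists_continuous_section ha
    ⟨hquot.lift ⟨F, hFc⟩ hfib, ContinuousMap.continuous _, fun y => ?_⟩
  obtain ⟨x, rfl⟩ := hsurj y
  conv_rhs => rw [← hF x]
  exact congrArg _ (DFunLike.congr_fun (hquot.lift_comp ⟨F, hFc⟩ hfib) x)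

theorem no_submetry_Rn_to_circle_general (n : ℕ) (a : ℝ) (ha : 0 < a) :
    ¬ ∃ P : EuclideanSpace ℝ (Fin n) → AddCircle a,
        Function.Surjective P ∧
        (∀ y : AddCircle a, IsConnected (P ⁻¹' {y})) ∧
        (∀ (x : EuclideanSpace ℝ (Fin n)) (y : AddCircle a),
          dist (P x) y = Metric.infDist x (P ⁻¹' {y})) :=
  not_exists_submetry_onto_addCircle ha.ne'

/-- There is no submetry with connected fibers from Euclidean `ℝⁿ` (`n ≥ 2`)
onto the circle `ℝ/aℤ` with its flat metric. -/
theorem no_submetry_Rn_to_circle (n : ℕ) (hn : 2 ≤ n) (a : ℝ) (ha : 0 < a) :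
    ¬ ∃ P : EuclideanSpace ℝ (Fin n) → AddCircle a,
        Function.Surjective P ∧
        (∀ y : AddCircle a, IsConnected (P ⁻¹' {y})) ∧
        (∀ (x : EuclideanSpace ℝ (Fin n)) (y : AddCircle a),
          dist (P x) y = Metric.infDist x (P ⁻¹' {y})) :=
  no_submetry_Rn_to_circle_general n a ha
end

section
/- Let a > 0, h ≥ 0, and let σ = σ_{a,h} ⊂ ℝ² be the spiral-like curve formed by two families of concentric half-circles of radii (1+2i)a, i ∈ ℕ, centered at x₀ = (0, h/2) in the upper half-plane {p₂ ≥ h/2} and at y₀ = (2a, −h/2) in the lower half-plane {p₂ ≤ −h/2}, joined by vertical segments in the strip {−h/2 ≤ p₂ ≤ h/2}. Then the signed distance function to σ takes values exactly in [−a, a]: every point of ℝ² lies at distance at most a from σ. -/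
/-!
Scaling `p - c` radially moves a point `p` onto the sphere about `c` whose radius is the odd
multiple of `a` nearest to `‖p - c‖`, at distance at most `a`; since the half-plane containing
`p` is preserved, this handles the two families of half-circles, and the vertical segments at the
odd multiples of `a` handle the strip. The bound is attained at `(0, h/2 + 2a)`: its distance
`2a` to `x₀` is an even multiple of `a`, so it is `a` away from every upper half-circle, and it
is `a` away horizontally from every segment and `2a + h` vertically from the lower half-plane.
-/

/-- The curve `σ_{a,h} ⊂ ℝ²`: two families of concentric half-circles of radii
`(1+2i)a` around `x₀ = (0, h/2)` (in the upper half-plane `{p₂ ≥ h/2}`) and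
around `y₀ = (2a, -h/2)` (in the lower half-plane `{p₂ ≤ -h/2}`),
joined by the vertical segments `{(2j+1)a} × [-h/2, h/2]`. -/
def sigmaCurve (a h : ℝ) : Set (EuclideanSpace ℝ (Fin 2)) :=
  {p | (∃ i : ℕ, Real.sqrt ((p 0) ^ 2 + (p 1 - h / 2) ^ 2) = (1 + 2 * i) * a) ∧ h / 2 ≤ p 1} ∪
  {p | (∃ i : ℕ, Real.sqrt ((p 0 - 2 * a) ^ 2 + (p 1 + h / 2) ^ 2) = (1 + 2 * i) * a) ∧
        p 1 ≤ -(h / 2)} ∪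
  {p | (∃ j : ℤ, p 0 = (2 * j + 1) * a) ∧ p 1 ∈ Set.Icc (-(h / 2)) (h / 2)}

open Metric

section OddMultiples

variable {a : ℝ}

theorem abs_sub_odd_mul_floor_le (ha : 0 < a) (x : ℝ) :
    |x - (2 * ⌊x / (2 * a)⌋ + 1) * a| ≤ a := by
  have h2a : 0 < 2 * a := by positivity
  have hlo : ⌊x / (2 * a)⌋ * (2 * a) ≤ x := (le_div_iff₀ h2a).mp (Int.floor_le _)
  have hhi : x < (⌊x / (2 * a)⌋ + 1) * (2 * a) := (div_lt_iff₀ h2a).mp (Int.lt_floor_add_one _)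
  rw [abs_le]
  constructor <;> linarith

theorem exists_abs_sub_odd_mul_le (ha : 0 < a) (x : ℝ) : ∃ j : ℤ, |x - (2 * j + 1) * a| ≤ a :=
  ⟨_, abs_sub_odd_mul_floor_le ha x⟩

theorem exists_nat_abs_sub_odd_mul_le (ha : 0 < a) {r : ℝ} (hr : 0 ≤ r) :
    ∃ i : ℕ, |r - (1 + 2 * i) * a| ≤ a := by
  refine ⟨⌊r / (2 * a)⌋₊, ?_⟩
  rw [natCast_floor_eq_intCast_floor (by positivity), add_comm 1]
  exact abs_sub_odd_mul_floor_le ha r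

theorem le_abs_odd_mul (ha : 0 ≤ a) (j : ℤ) : a ≤ |(2 * j + 1) * a| := by
  have hj : (1 : ℝ) ≤ |2 * (j : ℝ) + 1| := by
    exact_mod_cast Int.one_le_abs (show 2 * j + 1 ≠ 0 by omega)
  rw [abs_mul, abs_of_nonneg ha]
  nlinarith

end OddMultiples

section Spheres

variable {E : Type*} [NormedAddCommGroup E] [NormedSpace ℝ E] {a : ℝ}

theorem exists_odd_sphere_point_on_ray (ha : 0 < a) {c p : E} (hp : p ≠ c) :
    ∃ (i : ℕ) (t : ℝ), 0 ≤ t ∧ dist (c + t • (p - c)) c = (1 + 2 * i) * a ∧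
      dist p (c + t • (p - c)) ≤ a := by
  have hv : 0 < ‖p - c‖ := norm_pos_iff.mpr (sub_ne_zero.mpr hp)
  obtain ⟨i, hi⟩ := exists_nat_abs_sub_odd_mul_le ha hv.le
  set R := (1 + 2 * (i : ℝ)) * a
  have ht : 0 ≤ R / ‖p - c‖ := by positivity
  have hnorm : ‖(R / ‖p - c‖) • (p - c)‖ = R := by
    rw [norm_smul, Real.norm_of_nonneg ht, div_mul_cancel₀ _ hv.ne']
  refine ⟨i, R / ‖p - c‖, ht, ?_, ?_⟩
  · rwa [dist_eq_norm_sub, add_sub_cancel_left]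
  · rw [dist_eq_norm_sub, sub_add_eq_sub_sub,
      (SameRay.sameRay_nonneg_smul_right _ ht).norm_sub, hnorm]
    exact hi

end Spheres

section Plane

theorem EuclideanSpace.dist_eq_sqrt_fin_two (p q : EuclideanSpace ℝ (Fin 2)) :
    dist p q = √((p 0 - q 0) ^ 2 + (p 1 - q 1) ^ 2) := by
  simp [EuclideanSpace.dist_eq, Fin.sum_univ_two, Real.dist_eq, sq_abs]

theorem abs_sub_apply_le_dist {ι : Type*} [Fintype ι] (p q : EuclideanSpace ℝ ι) (i : ι) :
    |p i - q i| ≤ dist p q :=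
  PiLp.dist_apply_le p q i

theorem mem_sigmaCurve_iff {a h : ℝ} {q : EuclideanSpace ℝ (Fin 2)} :
    q ∈ sigmaCurve a h ↔
      ((∃ i : ℕ, dist q !₂[0, h / 2] = (1 + 2 * i) * a) ∧ h / 2 ≤ q 1) ∨
      ((∃ i : ℕ, dist q !₂[2 * a, -(h / 2)] = (1 + 2 * i) * a) ∧ q 1 ≤ -(h / 2)) ∨
      ((∃ j : ℤ, q 0 = (2 * j + 1) * a) ∧ q 1 ∈ Set.Icc (-(h / 2)) (h / 2)) := by
  simp [sigmaCurve, EuclideanSpace.dist_eq_sqrt_fin_two, or_assoc]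

variable {a h : ℝ}

theorem sigmaCurve_nonempty (ha : 0 < a) : (sigmaCurve a h).Nonempty :=
  ⟨!₂[a, h / 2], mem_sigmaCurve_iff.2 <| Or.inl
    ⟨⟨0, by simp [EuclideanSpace.dist_eq_sqrt_fin_two, Real.sqrt_sq ha.le]⟩, by simp⟩⟩

theorem infDist_sigmaCurve_le (ha : 0 < a) (p : EuclideanSpace ℝ (Fin 2)) :
    infDist p (sigmaCurve a h) ≤ a := by
  suffices ∃ q ∈ sigmaCurve a h, dist p q ≤ a by
    obtain ⟨q, hq, hpq⟩ := this
    exact (infDist_le_dist_of_mem hq).trans hpq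
  rcases lt_or_ge (h / 2) (p 1) with hupper | hupper
  · have hp : p ≠ !₂[0, h / 2] := fun e => by simp [e] at hupper
    obtain ⟨i, t, ht, hi, hpq⟩ := exists_odd_sphere_point_on_ray ha hp
    refine ⟨_, mem_sigmaCurve_iff.2 (Or.inl ⟨⟨i, hi⟩, ?_⟩), hpq⟩
    simpa using mul_nonneg ht (sub_nonneg.2 hupper.le)
  rcases lt_or_ge (p 1) (-(h / 2)) with hlower | hlower
  · have hp : p ≠ !₂[2 * a, -(h / 2)] := fun e => by simp [e] at hlower
    obtain ⟨i, t, ht, hi, hpq⟩ := exists_odd_sphere_point_on_ray ha hp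
    refine ⟨_, mem_sigmaCurve_iff.2 (Or.inr (Or.inl ⟨⟨i, hi⟩, ?_⟩)), hpq⟩
    simpa using mul_nonpos_of_nonneg_of_nonpos ht (by linarith)
  obtain ⟨j, hj⟩ := exists_abs_sub_odd_mul_le ha (p 0)
  refine ⟨!₂[(2 * j + 1) * a, p 1],
    mem_sigmaCurve_iff.2 (Or.inr (Or.inr ⟨⟨j, by simp⟩, by simp [hlower, hupper]⟩)), ?_⟩
  simpa [EuclideanSpace.dist_eq_sqrt_fin_two, Real.sqrt_sq_eq_abs] using hj

theorem le_infDist_sigmaCurve (ha : 0 < a) (hh : 0 ≤ h) :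
    a ≤ infDist !₂[0, h / 2 + 2 * a] (sigmaCurve a h) := by
  rw [le_infDist (sigmaCurve_nonempty ha)]
  intro q hq
  rcases mem_sigmaCurve_iff.1 hq with ⟨⟨i, hi⟩, -⟩ | ⟨-, hq1⟩ | ⟨⟨j, hj⟩, -⟩
  · have hcenter : dist !₂[0, h / 2 + 2 * a] !₂[0, h / 2] = 2 * a := by
      simp [EuclideanSpace.dist_eq_sqrt_fin_two, Real.sqrt_sq (by positivity : 0 ≤ 2 * a)]
    have htri := abs_dist_sub_le q !₂[0, h / 2 + 2 * a] !₂[0, h / 2]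
    rw [hi, hcenter, show (1 + 2 * (i : ℝ)) * a - 2 * a = (2 * ((i - 1 : ℤ) : ℝ) + 1) * a by
      push_cast; ring, dist_comm] at htri
    exact (le_abs_odd_mul ha.le _).trans htri
  · have hcoord := abs_sub_apply_le_dist !₂[0, h / 2 + 2 * a] q 1
    simp only [Matrix.cons_val_one, Matrix.cons_val_fin_one] at hcoord
    linarith [le_abs_self (h / 2 + 2 * a - q 1)]
  · have hcoord := abs_sub_apply_le_dist !₂[0, h / 2 + 2 * a] q 0
    simp only [Matrix.cons_val_zero, hj, zero_sub, abs_neg] at hcoord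
    exact (le_abs_odd_mul ha.le j).trans hcoord

end Plane

/-- Every point of the plane lies within distance `a` of `σ_{a,h}`, and this
bound is sharp: the supremum of the distance to `σ_{a,h}` equals `a`. -/
theorem sigmaCurve_neighborhood (a h : ℝ) (ha : 0 < a) (hh : 0 ≤ h) :
    (∀ p : EuclideanSpace ℝ (Fin 2), Metric.infDist p (sigmaCurve a h) ≤ a) ∧
    (⨆ p : EuclideanSpace ℝ (Fin 2), Metric.infDist p (sigmaCurve a h)) = a := by
  refine ⟨infDist_sigmaCurve_le ha, le_antisymm (ciSup_le (infDist_sigmaCurve_le ha)) ?_⟩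
  exact le_ciSup_of_le ⟨a, Set.forall_mem_range.2 (infDist_sigmaCurve_le ha)⟩ _
    (le_infDist_sigmaCurve ha hh)
end

section
/- Let Y₀ and Y be one-dimensional Alexandrov spaces (each isometric to ℝ, a circle, a half-line, or a closed interval) and let P : Y₀ → Y be a submetry with discrete fibers. If Y₀ is a closed interval of length 1, then Y is a closed interval of length 1/k for some positive integer k, and P is the standard folding map; in particular, a submetry with discrete fibers from [0,1] onto [0,L] exists if and only if L = 1/k for some k ∈ ℕ, k ≥ 1, and then P(x) = dist(x, 2L·ℤ) viewed in [0, L]. -/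
open Metric Set

namespace SubFold

noncomputable def fold (L t : ℝ) : ℝ := |t - 2*L*(round (t/(2*L)) : ℤ)|

lemma le_infDist' {α} [MetricSpace α] {s : Set α} {x : α} {b : ℝ} (hs : s.Nonempty)
    (h : ∀ y ∈ s, b ≤ dist x y) : b ≤ Metric.infDist x s := by
  by_contra hc
  push_neg at hc
  obtain ⟨y, hy, hlt⟩ := (Metric.infDist_lt_iff hs).1 hc
  exact absurd (h y hy) (not_le.2 hlt)

variable {L : ℝ}

lemma round_opt (hL : 0 < L) (t : ℝ) (m : ℤ) : fold L t ≤ |t - 2*L*m| := by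
  unfold fold
  set c : ℤ := round (t/(2*L)) with hc
  rcases eq_or_ne m c with rfl | hne
  · rfl
  · have h2L : (0:ℝ) < 2*L := by linarith
    have h1 : |t/(2*L) - c| ≤ 1/2 := abs_sub_round _
    have h2 : (1:ℝ) ≤ |(m:ℝ) - c| := by
      have : (1:ℤ) ≤ |m - c| := Int.one_le_abs (sub_ne_zero.2 hne)
      calc (1:ℝ) = ((1:ℤ):ℝ) := by norm_num
        _ ≤ ((|m - c|:ℤ):ℝ) := by exact_mod_cast this
        _ = |(m:ℝ) - c| := by push_cast [Int.cast_abs]; ring_nf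
    have h3 : 1/2 ≤ |t/(2*L) - m| := by
      have := abs_sub_abs_le_abs_sub ((m:ℝ) - c) (t/(2*L) - c)
      have h4 : |(m:ℝ) - c - (t/(2*L) - c)| = |t/(2*L) - m| := by
        rw [show (m:ℝ) - c - (t/(2*L) - c) = -(t/(2*L) - m) by ring, abs_neg]
      rw [h4] at this
      linarith [abs_nonneg (t/(2*L) - (c:ℝ))]
    have key : ∀ n : ℤ, |t - 2*L*n| = 2*L * |t/(2*L) - n| := by
      intro n
      have he : t - 2*L*n = 2*L*(t/(2*L) - n) := by field_simp
      rw [he, abs_mul, abs_of_pos h2L]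
    rw [key, key]
    have := abs_nonneg (t/(2*L) - (c:ℝ))
    nlinarith

lemma fold_nonneg (L t : ℝ) : 0 ≤ fold L t := abs_nonneg _

lemma fold_le (hL : 0 < L) (t : ℝ) : fold L t ≤ L := by
  unfold fold
  have h2L : (0:ℝ) < 2*L := by linarith
  have h1 : |t/(2*L) - round (t/(2*L))| ≤ 1/2 := abs_sub_round _
  have key : |t - 2*L*(round (t/(2*L)):ℤ)| = 2*L * |t/(2*L) - round (t/(2*L))| := by
    have he : t - 2*L*(round (t/(2*L)):ℤ) = 2*L*(t/(2*L) - round (t/(2*L))) := by field_simp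
    rw [he, abs_mul, abs_of_pos h2L]
  rw [key]
  nlinarith

lemma fold_eq (hL : 0 < L) {t : ℝ} (m : ℤ) (h : |t - 2*L*m| ≤ L) : fold L t = |t - 2*L*m| := by
  refine le_antisymm (round_opt hL t m) ?_
  unfold fold
  set c : ℤ := round (t/(2*L)) with hc
  rcases eq_or_ne m c with rfl | hne
  · rfl
  · -- |t - 2Lm| ≥ 2L - |t - 2Lc| and fold ≤ |t-2Lm| ≤ L gives both = L
    have h2 : (2:ℝ)*L ≤ |2*L*(m:ℝ) - 2*L*c| := by
      have : (1:ℤ) ≤ |m - c| := Int.one_le_abs (sub_ne_zero.2 hne)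
      have h3 : (1:ℝ) ≤ |(m:ℝ) - c| := by
        calc (1:ℝ) = ((1:ℤ):ℝ) := by norm_num
          _ ≤ ((|m - c|:ℤ):ℝ) := by exact_mod_cast this
          _ = |(m:ℝ) - c| := by push_cast [Int.cast_abs]; ring_nf
      have : |2*L*(m:ℝ) - 2*L*c| = 2*L*|(m:ℝ) - c| := by
        rw [show 2*L*(m:ℝ) - 2*L*c = 2*L*((m:ℝ) - c) by ring, abs_mul,
          abs_of_pos (show (0:ℝ) < 2*L by linarith)]
      rw [this]
      nlinarith
    have htri : |2*L*(m:ℝ) - 2*L*c| ≤ |t - 2*L*m| + |t - 2*L*c| := by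
      have := abs_sub (t - 2*L*(m:ℝ)) (t - 2*L*(c:ℝ))
      calc |2*L*(m:ℝ) - 2*L*c| = |(t - 2*L*(c:ℝ)) - (t - 2*L*m)| := by ring_nf
        _ ≤ |t - 2*L*(c:ℝ)| + |t - 2*L*(m:ℝ)| := abs_sub _ _
        _ = _ := by ring
    have hfle : |t - 2*L*(c:ℝ)| ≤ |t - 2*L*(m:ℝ)| := round_opt hL t m
    linarith

lemma fold_lip (hL : 0 < L) (a b : ℝ) : |fold L a - fold L b| ≤ |a - b| := by
  have h1 : fold L a ≤ |a - b| + fold L b := by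
    calc fold L a ≤ |a - 2*L*(round (b/(2*L)):ℤ)| := round_opt hL a _
      _ ≤ |a - b| + |b - 2*L*(round (b/(2*L)):ℤ)| := by
          have := abs_add_le (a - b) (b - 2*L*((round (b/(2*L)):ℤ):ℝ))
          calc |a - 2*L*((round (b/(2*L)):ℤ):ℝ)|
              = |(a - b) + (b - 2*L*((round (b/(2*L)):ℤ):ℝ))| := by ring_nf
            _ ≤ _ := abs_add_le _ _
      _ = |a - b| + fold L b := rfl
  have h2 : fold L b ≤ |a - b| + fold L a := by
    calc fold L b ≤ |b - 2*L*(round (a/(2*L)):ℤ)| := round_opt hL b _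
      _ ≤ |a - b| + fold L a := by
          have : |b - 2*L*((round (a/(2*L)):ℤ):ℝ)|
              = |(b - a) + (a - 2*L*((round (a/(2*L)):ℤ):ℝ))| := by ring_nf
          rw [this]
          calc |(b - a) + (a - 2*L*((round (a/(2*L)):ℤ):ℝ))|
              ≤ |b - a| + |a - 2*L*((round (a/(2*L)):ℤ):ℝ)| := abs_add_le _ _
            _ = |a - b| + fold L a := by rw [abs_sub_comm]; rfl
  rw [abs_sub_le_iff]
  constructor <;> linarith

lemma fold_infDist (hL : 0 < L) (t : ℝ) :
    Metric.infDist t (Set.range fun m : ℤ => 2*L*m) = fold L t := by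
  refine le_antisymm ?_ ?_
  · have : (2*L*((round (t/(2*L)):ℤ):ℝ)) ∈ Set.range fun m : ℤ => 2*L*(m:ℝ) :=
      ⟨round (t/(2*L)), rfl⟩
    calc Metric.infDist t (Set.range fun m : ℤ => 2*L*(m:ℝ)) ≤ dist t (2*L*((round (t/(2*L)):ℤ):ℝ)) :=
          Metric.infDist_le_dist_of_mem this
      _ = fold L t := by rw [Real.dist_eq]; rfl
  · refine le_infDist' ⟨2*L*((0:ℤ):ℝ), ⟨0, rfl⟩⟩ ?_
    rintro y ⟨m, rfl⟩
    rw [Real.dist_eq]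
    exact round_opt hL t m


structure GoodMap (L : ℝ) where
  f : Set.Icc (0:ℝ) 1 → ℝ
  mem : ∀ x, f x ∈ Set.Icc 0 L
  lip : ∀ a b, |f a - f b| ≤ |(a:ℝ) - (b:ℝ)|
  lift : ∀ (x : Set.Icc (0:ℝ) 1) (y : ℝ), y ∈ Set.Icc 0 L →
    ∃ x', f x' = y ∧ |(x:ℝ) - (x':ℝ)| = |f x - y|
  fin : ∀ y : ℝ, {x | f x = y}.Finite

lemma GoodMap.sep (S : GoodMap L) (v : ℝ) :
    ∃ δ > 0, ∀ a b, S.f a = v → S.f b = v → a ≠ b → δ ≤ |(a:ℝ) - (b:ℝ)| := by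
  classical
  have hF := S.fin v
  set Fs := hF.toFinset with hFs
  set D := ((Fs ×ˢ Fs).filter (fun p => p.1 ≠ p.2)).image
      (fun p : (Set.Icc (0:ℝ) 1) × (Set.Icc (0:ℝ) 1) => |((p.1 : ℝ)) - ((p.2 : ℝ))|) with hD
  have hmemD : ∀ a b, S.f a = v → S.f b = v → a ≠ b → |((a:ℝ)) - ((b:ℝ))| ∈ D := by
    intro a b ha hb hab
    refine Finset.mem_image.2 ⟨(a, b), ?_, rfl⟩
    refine Finset.mem_filter.2 ⟨Finset.mem_product.2 ⟨?_, ?_⟩, hab⟩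
    · simpa [hFs, Set.Finite.mem_toFinset] using ha
    · simpa [hFs, Set.Finite.mem_toFinset] using hb
  by_cases hDe : D.Nonempty
  · refine ⟨D.min' hDe, ?_, ?_⟩
    · have hmin := D.min'_mem hDe
      obtain ⟨p, hp, hval⟩ := Finset.mem_image.1 hmin
      have hne : p.1 ≠ p.2 := (Finset.mem_filter.1 hp).2
      have : ((p.1 : ℝ)) ≠ ((p.2 : ℝ)) := fun h => hne (Subtype.ext h)
      rw [← hval]
      exact abs_pos.2 (sub_ne_zero.2 this)
    · intro a b ha hb hab
      exact D.min'_le _ (hmemD a b ha hb hab)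
  · refine ⟨1, one_pos, ?_⟩
    intro a b ha hb hab
    exact absurd ⟨_, hmemD a b ha hb hab⟩ hDe

lemma abs_sub_cases {p q d : ℝ} (h : |p - q| = d) : p = q + d ∨ p = q - d := by
  have hd : 0 ≤ d := h ▸ abs_nonneg _
  rcases (abs_eq hd).1 h with h' | h'
  · left; linarith
  · right; linarith

lemma GoodMap.radial (S : GoodMap L) (x : Set.Icc (0:ℝ) 1) :
    ∃ ρ > 0, ∀ a : Set.Icc (0:ℝ) 1, |(a:ℝ) - (x:ℝ)| < ρ →
      |S.f a - S.f x| = |(a:ℝ) - (x:ℝ)| := by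
  obtain ⟨δ, hδ, hsep⟩ := S.sep (S.f x)
  refine ⟨δ/2, by positivity, fun a ha => ?_⟩
  have hle : |S.f a - S.f x| ≤ |(a:ℝ) - (x:ℝ)| := S.lip a x
  by_contra hne
  have hlt : |S.f a - S.f x| < |(a:ℝ) - (x:ℝ)| := lt_of_le_of_ne hle hne
  obtain ⟨x', hx'1, hx'2⟩ := S.lift a (S.f x) (S.mem x)
  have hane : x' ≠ x := by
    intro h
    rw [h] at hx'2
    linarith
  have hdd : |(x':ℝ) - (x:ℝ)| < δ := by
    have h1 : |(x':ℝ) - (x:ℝ)| ≤ |(x':ℝ) - (a:ℝ)| + |(a:ℝ) - (x:ℝ)| := abs_sub_le _ _ _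
    have h2 : |(x':ℝ) - (a:ℝ)| = |S.f a - S.f x| := by rw [abs_sub_comm, hx'2]
    linarith
  exact absurd (hsep x' x hx'1 rfl hane) (not_le.2 hdd)

lemma GoodMap.no_locmax (S : GoodMap L) (hL : 0 < L) (x : Set.Icc (0:ℝ) 1)
    (h : S.f x < L) {r : ℝ} (hr : 0 < r) :
    ∃ a : Set.Icc (0:ℝ) 1, |(a:ℝ) - (x:ℝ)| < r ∧ S.f x < S.f a := by
  set s := min (r/2) (L - S.f x) with hs
  have hs0 : 0 < s := lt_min (by linarith) (by linarith)
  have hsr : s < r := lt_of_le_of_lt (min_le_left _ _) (by linarith)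
  have hyL : S.f x + s ∈ Set.Icc 0 L := by
    constructor
    · have := (S.mem x).1; linarith
    · have : s ≤ L - S.f x := min_le_right _ _; linarith
  obtain ⟨a, ha1, ha2⟩ := S.lift x (S.f x + s) hyL
  refine ⟨a, ?_, ?_⟩
  · rw [abs_sub_comm, ha2, show S.f x - (S.f x + s) = -s by ring, abs_neg, abs_of_pos hs0]
    exact hsr
  · rw [ha1]; linarith

lemma GoodMap.no_locmin (S : GoodMap L) (hL : 0 < L) (x : Set.Icc (0:ℝ) 1)
    (h : 0 < S.f x) {r : ℝ} (hr : 0 < r) :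
    ∃ a : Set.Icc (0:ℝ) 1, |(a:ℝ) - (x:ℝ)| < r ∧ S.f a < S.f x := by
  set s := min (r/2) (S.f x) with hs
  have hs0 : 0 < s := lt_min (by linarith) h
  have hsr : s < r := lt_of_le_of_lt (min_le_left _ _) (by linarith)
  have hyL : S.f x - s ∈ Set.Icc 0 L := by
    constructor
    · have : s ≤ S.f x := min_le_right _ _; linarith
    · have := (S.mem x).2; linarith
  obtain ⟨a, ha1, ha2⟩ := S.lift x (S.f x - s) hyL
  refine ⟨a, ?_, ?_⟩
  · rw [abs_sub_comm, ha2, show S.f x - (S.f x - s) = s by ring, abs_of_pos hs0]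
    exact hsr
  · rw [ha1]; linarith

lemma abs_sub_lt_add {p q : ℝ} (hp : 0 < p) (hq : 0 < q) : |p - q| < p + q := by
  rw [abs_sub_lt_iff]; constructor <;> linarith

lemma GoodMap.signR (S : GoodMap L) (x : Set.Icc (0:ℝ) 1) :
    ∃ ρ > 0,
      (∀ a : Set.Icc (0:ℝ) 1, (x:ℝ) < (a:ℝ) → (a:ℝ) < (x:ℝ) + ρ →
        S.f a = S.f x + ((a:ℝ) - (x:ℝ))) ∨
      (∀ a : Set.Icc (0:ℝ) 1, (x:ℝ) < (a:ℝ) → (a:ℝ) < (x:ℝ) + ρ →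
        S.f a = S.f x - ((a:ℝ) - (x:ℝ))) := by
  obtain ⟨ρ, hρ, hr⟩ := S.radial x
  refine ⟨ρ, hρ, ?_⟩
  by_cases h : ∀ a : Set.Icc (0:ℝ) 1, (x:ℝ) < (a:ℝ) → (a:ℝ) < (x:ℝ) + ρ →
      S.f a = S.f x + ((a:ℝ) - (x:ℝ))
  · exact Or.inl h
  · push_neg at h
    obtain ⟨a₀, h1, h2, h3⟩ := h
    have hA : |S.f a₀ - S.f x| = (a₀:ℝ) - (x:ℝ) := by
      have := hr a₀ (by rw [abs_of_pos (by linarith)]; linarith)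
      rw [this, abs_of_pos (by linarith)]
    have ha₀ : S.f a₀ = S.f x - ((a₀:ℝ) - (x:ℝ)) := by
      rcases abs_sub_cases hA with h' | h'
      · exact absurd h' h3
      · exact h'
    refine Or.inr (fun a haL haR => ?_)
    have hAa : |S.f a - S.f x| = (a:ℝ) - (x:ℝ) := by
      have := hr a (by rw [abs_of_pos (by linarith)]; linarith)
      rw [this, abs_of_pos (by linarith)]
    rcases abs_sub_cases hAa with h' | h'
    · exfalso
      have hd : |S.f a - S.f a₀| = ((a:ℝ) - (x:ℝ)) + ((a₀:ℝ) - (x:ℝ)) := by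
        rw [show S.f a - S.f a₀ = ((a:ℝ) - (x:ℝ)) + ((a₀:ℝ) - (x:ℝ)) by rw [h', ha₀]; ring]
        exact abs_of_pos (by linarith)
      have hlip := S.lip a a₀
      rw [hd] at hlip
      have hstrict := abs_sub_lt_add (show (0:ℝ) < (a:ℝ) - (x:ℝ) by linarith)
        (show (0:ℝ) < (a₀:ℝ) - (x:ℝ) by linarith)
      rw [show ((a:ℝ) - (x:ℝ)) - ((a₀:ℝ) - (x:ℝ)) = (a:ℝ) - (a₀:ℝ) by ring] at hstrict
      linarith
    · exact h'

lemma GoodMap.signL (S : GoodMap L) (x : Set.Icc (0:ℝ) 1) :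
    ∃ ρ > 0,
      (∀ a : Set.Icc (0:ℝ) 1, (a:ℝ) < (x:ℝ) → (x:ℝ) - ρ < (a:ℝ) →
        S.f a = S.f x + ((x:ℝ) - (a:ℝ))) ∨
      (∀ a : Set.Icc (0:ℝ) 1, (a:ℝ) < (x:ℝ) → (x:ℝ) - ρ < (a:ℝ) →
        S.f a = S.f x - ((x:ℝ) - (a:ℝ))) := by
  obtain ⟨ρ, hρ, hr⟩ := S.radial x
  refine ⟨ρ, hρ, ?_⟩
  by_cases h : ∀ a : Set.Icc (0:ℝ) 1, (a:ℝ) < (x:ℝ) → (x:ℝ) - ρ < (a:ℝ) →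
      S.f a = S.f x + ((x:ℝ) - (a:ℝ))
  · exact Or.inl h
  · push_neg at h
    obtain ⟨a₀, h1, h2, h3⟩ := h
    have hA : |S.f a₀ - S.f x| = (x:ℝ) - (a₀:ℝ) := by
      have := hr a₀ (by rw [abs_sub_comm, abs_of_pos (by linarith)]; linarith)
      rw [this, abs_sub_comm, abs_of_pos (by linarith)]
    have ha₀ : S.f a₀ = S.f x - ((x:ℝ) - (a₀:ℝ)) := by
      rcases abs_sub_cases hA with h' | h'
      · exact absurd h' h3
      · exact h'
    refine Or.inr (fun a haL haR => ?_)
    have hAa : |S.f a - S.f x| = (x:ℝ) - (a:ℝ) := by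
      have := hr a (by rw [abs_sub_comm, abs_of_pos (by linarith)]; linarith)
      rw [this, abs_sub_comm, abs_of_pos (by linarith)]
    rcases abs_sub_cases hAa with h' | h'
    · exfalso
      have hd : |S.f a - S.f a₀| = ((x:ℝ) - (a:ℝ)) + ((x:ℝ) - (a₀:ℝ)) := by
        rw [show S.f a - S.f a₀ = ((x:ℝ) - (a:ℝ)) + ((x:ℝ) - (a₀:ℝ)) by rw [h', ha₀]; ring]
        exact abs_of_pos (by linarith)
      have hlip := S.lip a a₀
      rw [hd] at hlip
      have hstrict := abs_sub_lt_add (show (0:ℝ) < (x:ℝ) - (a₀:ℝ) by linarith)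
        (show (0:ℝ) < (x:ℝ) - (a:ℝ) by linarith)
      rw [show ((x:ℝ) - (a₀:ℝ)) - ((x:ℝ) - (a:ℝ)) = (a:ℝ) - (a₀:ℝ) by ring] at hstrict
      linarith
    · exact h'


lemma round_nonneg {x : ℝ} (hx : 0 ≤ x) : 0 ≤ round x := by
  rw [round_eq]
  exact Int.floor_nonneg.2 (by linarith)

lemma GoodMap.step (S : GoodMap L) (hL : 0 < L) {t₀ : ℝ} (h00 : 0 ≤ t₀)
    (hgood : ∀ a : Set.Icc (0:ℝ) 1, (a:ℝ) ≤ t₀ → S.f a = fold L (a:ℝ)) :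
    ∃ η > 0, ∀ a : Set.Icc (0:ℝ) 1, (a:ℝ) ≤ t₀ + η → S.f a = fold L (a:ℝ) := by
  by_cases h1 : 1 ≤ t₀
  · exact ⟨1, one_pos, fun a _ => hgood a (le_trans a.2.2 h1)⟩
  push_neg at h1
  set x₀ : Set.Icc (0:ℝ) 1 := ⟨t₀, ⟨h00, le_of_lt h1⟩⟩ with hx₀
  have hfx₀ : S.f x₀ = fold L t₀ := hgood x₀ le_rfl
  set c : ℤ := round (t₀/(2*L)) with hc
  have hfold : fold L t₀ = |t₀ - 2*L*c| := rfl
  have hc0 : 0 ≤ c := round_nonneg (by positivity)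
  have hvL : fold L t₀ ≤ L := fold_le hL t₀
  have hv0 : 0 ≤ fold L t₀ := fold_nonneg L t₀
  rcases eq_or_lt_of_le hv0 with hv0' | hv0'
  · -- Case A : fold L t₀ = 0, t₀ = 2 L c
    have ht₀c : t₀ = 2*L*c := by
      have : |t₀ - 2*L*(c:ℝ)| = 0 := by rw [← hfold, ← hv0']
      have := abs_eq_zero.1 this
      linarith
    obtain ⟨ρ, hρ, hrad⟩ := S.radial x₀
    refine ⟨min (ρ/2) (L/2), lt_min (by linarith) (by linarith), fun a ha => ?_⟩
    rcases le_or_gt (a:ℝ) t₀ with hle | hlt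
    · exact hgood a hle
    · set s : ℝ := (a:ℝ) - t₀ with hs
      have hs0 : 0 < s := by simp only [hs]; linarith
      have hsle : s ≤ min (ρ/2) (L/2) := by simp only [hs]; linarith
      have h2 : |S.f a - S.f x₀| = s := by
        have := hrad a (by
          rw [show ((a:ℝ) - (x₀:ℝ)) = s from rfl, abs_of_pos hs0]
          exact lt_of_le_of_lt (le_trans hsle (min_le_left _ _)) (by linarith))
        rw [this, show ((a:ℝ) - (x₀:ℝ)) = s from rfl, abs_of_pos hs0]
      have hfa : S.f a = s := by
        rw [hfx₀, ← hv0'] at h2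
        have hge := (S.mem a).1
        rcases abs_sub_cases h2 with h' | h' <;> [linarith; linarith]
      have hfolda : fold L (a:ℝ) = s := by
        have habs : |(a:ℝ) - 2*L*c| = s := by
          rw [show (a:ℝ) - 2*L*(c:ℝ) = s by rw [hs]; linarith, abs_of_pos hs0]
        rw [fold_eq hL c (by rw [habs]; exact le_trans (le_trans hsle (min_le_right _ _)) (by linarith)), habs]
      rw [hfa, hfolda]
  rcases eq_or_lt_of_le hvL with hvL' | hvL'
  · -- Case B : fold L t₀ = L
    obtain ⟨m, hm⟩ : ∃ m : ℤ, t₀ - 2*L*m = -L := by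
      rcases abs_sub_cases hfold.symm with h' | h'
      · exact ⟨c + 1, by push_cast; rw [hvL'] at h'; linarith⟩
      · exact ⟨c, by rw [hvL'] at h'; linarith⟩
    obtain ⟨ρ, hρ, hrad⟩ := S.radial x₀
    refine ⟨min (ρ/2) (L/2), lt_min (by linarith) (by linarith), fun a ha => ?_⟩
    rcases le_or_gt (a:ℝ) t₀ with hle | hlt
    · exact hgood a hle
    · set s : ℝ := (a:ℝ) - t₀ with hs
      have hs0 : 0 < s := by simp only [hs]; linarith
      have hsle : s ≤ min (ρ/2) (L/2) := by simp only [hs]; linarith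
      have h2 : |S.f a - S.f x₀| = s := by
        have := hrad a (by
          rw [show ((a:ℝ) - (x₀:ℝ)) = s from rfl, abs_of_pos hs0]
          exact lt_of_le_of_lt (le_trans hsle (min_le_left _ _)) (by linarith))
        rw [this, show ((a:ℝ) - (x₀:ℝ)) = s from rfl, abs_of_pos hs0]
      have hfa : S.f a = L - s := by
        rw [hfx₀, hvL'] at h2
        have hge := (S.mem a).2
        rcases abs_sub_cases h2 with h' | h' <;> [linarith; linarith]
      have hsL : s ≤ L := le_trans (le_trans hsle (min_le_right _ _)) (by linarith)
      have hfolda : fold L (a:ℝ) = L - s := by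
        have habs : |(a:ℝ) - 2*L*m| = L - s := by
          rw [show (a:ℝ) - 2*L*(m:ℝ) = s - L by rw [hs]; linarith, abs_sub_comm,
            abs_of_nonneg (by linarith)]
        rw [fold_eq hL m (by rw [habs]; linarith), habs]
      rw [hfa, hfolda]
  · -- Case C : 0 < fold L t₀ < L
    set v : ℝ := fold L t₀ with hv
    obtain ⟨ρ₁, hρ₁, hsign⟩ := S.signR x₀
    rcases abs_sub_cases hfold.symm with hcase | hcase
    · -- u > 0 : t₀ = 2 L c + v, fold increasing to the right
      have hu : t₀ - 2*L*c = v := by linarith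
      -- exclude decreasing sign
      rcases hsign with hpos | hneg
      · -- good case ε = +1
        refine ⟨min (ρ₁/2) ((L - v)/2), lt_min (by linarith) (by linarith), fun a ha => ?_⟩
        rcases le_or_gt (a:ℝ) t₀ with hle | hlt
        · exact hgood a hle
        · set s : ℝ := (a:ℝ) - t₀ with hs
          have hs0 : 0 < s := by simp only [hs]; linarith
          have hsle : s ≤ min (ρ₁/2) ((L - v)/2) := by simp only [hs]; linarith
          have hfa : S.f a = v + s := by
            rw [hpos a hlt (by
              have : s < ρ₁ := lt_of_le_of_lt (le_trans hsle (min_le_left _ _)) (by linarith)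
              simp only [hs] at this; push_cast; linarith), hfx₀]
          have hfolda : fold L (a:ℝ) = v + s := by
            have habs : |(a:ℝ) - 2*L*c| = v + s := by
              rw [show (a:ℝ) - 2*L*(c:ℝ) = v + s by rw [hs]; linarith,
                abs_of_pos (by linarith)]
            have hsL : v + s ≤ L := by
              have : s ≤ (L - v)/2 := le_trans hsle (min_le_right _ _)
              linarith
            rw [fold_eq hL c (by rw [habs]; linarith), habs]
          rw [hfa, hfolda]
      · -- bad case ε = -1 : local max at level v < L
        exfalso
        set r : ℝ := min ρ₁ v with hr
        have hr0 : 0 < r := lt_min hρ₁ hv0'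
        have hmax : ∀ a : Set.Icc (0:ℝ) 1, |(a:ℝ) - (x₀:ℝ)| < r → S.f a ≤ v := by
          intro a haball
          rcases lt_trichotomy ((a:ℝ)) t₀ with hlt | heq | hgt
          · have hs0 : 0 < t₀ - (a:ℝ) := by linarith
            have hsr : t₀ - (a:ℝ) < r := by
              rw [abs_sub_comm, abs_of_pos hs0] at haball; exact haball
            have hsv : t₀ - (a:ℝ) < v := lt_of_lt_of_le hsr (min_le_right _ _)
            have hfa : S.f a = v - (t₀ - (a:ℝ)) := by
              rw [hgood a (le_of_lt hlt)]
              have habs : |(a:ℝ) - 2*L*c| = v - (t₀ - (a:ℝ)) := by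
                rw [show (a:ℝ) - 2*L*(c:ℝ) = v - (t₀ - (a:ℝ)) by linarith,
                  abs_of_pos (by linarith)]
              rw [fold_eq hL c (by rw [habs]; linarith), habs]
            linarith
          · have : a = x₀ := Subtype.ext heq
            exact le_of_eq (by rw [this, hfx₀])
          · have hfa : S.f a = v - ((a:ℝ) - t₀) := by
              rw [hneg a hgt (by
                have : (a:ℝ) - t₀ < ρ₁ := by
                  rw [abs_of_pos (by linarith : (0:ℝ) < (a:ℝ) - (x₀:ℝ))] at haball
                  exact lt_of_lt_of_le haball (min_le_left _ _)
                push_cast; linarith), hfx₀]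
            linarith
        obtain ⟨a, haball, hagt⟩ := S.no_locmax hL x₀ (by rw [hfx₀]; exact hvL') hr0
        have := hmax a haball
        rw [hfx₀] at hagt
        linarith
    · -- u < 0 : t₀ = 2 L c - v, fold decreasing to the right
      have hu : t₀ - 2*L*c = -v := by linarith
      rcases hsign with hpos | hneg
      · -- bad case ε = +1 : local min at level v > 0
        exfalso
        set r : ℝ := min ρ₁ (L - v) with hr
        have hr0 : 0 < r := lt_min hρ₁ (by linarith)
        have hmin : ∀ a : Set.Icc (0:ℝ) 1, |(a:ℝ) - (x₀:ℝ)| < r → v ≤ S.f a := by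
          intro a haball
          rcases lt_trichotomy ((a:ℝ)) t₀ with hlt | heq | hgt
          · have hs0 : 0 < t₀ - (a:ℝ) := by linarith
            have hsr : t₀ - (a:ℝ) < r := by
              rw [abs_sub_comm, abs_of_pos hs0] at haball; exact haball
            have hsv : t₀ - (a:ℝ) < L - v := lt_of_lt_of_le hsr (min_le_right _ _)
            have hfa : S.f a = v + (t₀ - (a:ℝ)) := by
              rw [hgood a (le_of_lt hlt)]
              have habs : |(a:ℝ) - 2*L*c| = v + (t₀ - (a:ℝ)) := by
                rw [show (a:ℝ) - 2*L*(c:ℝ) = -(v + (t₀ - (a:ℝ))) by linarith, abs_neg,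
                  abs_of_pos (by linarith)]
              rw [fold_eq hL c (by rw [habs]; linarith), habs]
            linarith
          · have : a = x₀ := Subtype.ext heq
            exact le_of_eq (show v = S.f a by rw [this, hfx₀])
          · have hfa : S.f a = v + ((a:ℝ) - t₀) := by
              rw [hpos a hgt (by
                have : (a:ℝ) - t₀ < ρ₁ := by
                  rw [abs_of_pos (by linarith : (0:ℝ) < (a:ℝ) - (x₀:ℝ))] at haball
                  exact lt_of_lt_of_le haball (min_le_left _ _)
                push_cast; linarith), hfx₀]
            linarith
        obtain ⟨a, haball, halt⟩ := S.no_locmin hL x₀ (by rw [hfx₀]; exact hv0') hr0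
        have := hmin a haball
        rw [hfx₀] at halt
        linarith
      · -- good case ε = -1
        refine ⟨min (ρ₁/2) (v/2), lt_min (by linarith) (by linarith), fun a ha => ?_⟩
        rcases le_or_gt (a:ℝ) t₀ with hle | hlt
        · exact hgood a hle
        · set s : ℝ := (a:ℝ) - t₀ with hs
          have hs0 : 0 < s := by simp only [hs]; linarith
          have hsle : s ≤ min (ρ₁/2) (v/2) := by simp only [hs]; linarith
          have hfa : S.f a = v - s := by
            rw [hneg a hlt (by
              have : s < ρ₁ := lt_of_le_of_lt (le_trans hsle (min_le_left _ _)) (by linarith)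
              simp only [hs] at this; push_cast; linarith), hfx₀]
          have hfolda : fold L (a:ℝ) = v - s := by
            have hsv : s ≤ v/2 := le_trans hsle (min_le_right _ _)
            have habs : |(a:ℝ) - 2*L*c| = v - s := by
              rw [show (a:ℝ) - 2*L*(c:ℝ) = -(v - s) by rw [hs]; linarith, abs_neg,
                abs_of_nonneg (by linarith)]
            rw [fold_eq hL c (by rw [habs]; linarith), habs]
          rw [hfa, hfolda]


lemma fold_zero (hL : 0 < L) : fold L 0 = 0 := by
  have h0 : |(0:ℝ) - 2*L*((0:ℤ):ℝ)| = 0 := by norm_num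
  rw [fold_eq hL 0 (by rw [h0]; linarith), h0]

lemma GoodMap.master (S : GoodMap L) (hL : 0 < L)
    (h0 : S.f ⟨0, by norm_num⟩ = 0) :
    ∀ x : Set.Icc (0:ℝ) 1, S.f x = fold L (x:ℝ) := by
  by_contra hbad
  push_neg at hbad
  set B : Set ℝ := Subtype.val '' {x : Set.Icc (0:ℝ) 1 | S.f x ≠ fold L (x:ℝ)} with hB
  have hBne : B.Nonempty := by
    obtain ⟨x, hx⟩ := hbad
    exact ⟨x, x, hx, rfl⟩
  have hBbd : BddBelow B := ⟨0, by rintro b ⟨x, _, rfl⟩; exact x.2.1⟩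
  set t₀ := sInf B with ht₀
  have ht₀0 : 0 ≤ t₀ := le_csInf hBne (by rintro b ⟨x, _, rfl⟩; exact x.2.1)
  have hlt : ∀ x : Set.Icc (0:ℝ) 1, (x:ℝ) < t₀ → S.f x = fold L (x:ℝ) := by
    intro x hx
    by_contra hxx
    have hmem : (x:ℝ) ∈ B := ⟨x, hxx, rfl⟩
    exact absurd (csInf_le hBbd hmem) (not_le.2 hx)
  have heq : ∀ x : Set.Icc (0:ℝ) 1, (x:ℝ) ≤ t₀ → S.f x = fold L (x:ℝ) := by
    intro x hx
    rcases lt_or_eq_of_le hx with hx' | hx'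
    · exact hlt x hx'
    rcases eq_or_lt_of_le ht₀0 with h0' | h0'
    · have hx0 : x = ⟨0, by norm_num⟩ := Subtype.ext (by rw [hx', ← h0'])
      rw [hx0, h0, show ((⟨0, by norm_num⟩ : Set.Icc (0:ℝ) 1) : ℝ) = 0 from rfl,
        fold_zero hL]
    · have ht₀1 : t₀ ≤ 1 := by rw [← hx']; exact x.2.2
      have key : ∀ ε : ℝ, 0 < ε → ε < t₀ → |S.f x - fold L (x:ℝ)| ≤ 2*ε := by
        intro ε hε hεt
        set a : Set.Icc (0:ℝ) 1 := ⟨t₀ - ε, ⟨by linarith, by linarith⟩⟩ with ha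
        have hga : S.f a = fold L ((a:ℝ)) := hlt a (by
          show t₀ - ε < t₀; linarith)
        have hdist : |(x:ℝ) - (a:ℝ)| = ε := by
          rw [show ((x:ℝ) - (a:ℝ)) = ε by rw [hx']; show t₀ - (t₀ - ε) = ε; ring,
            abs_of_pos hε]
        have h1 : |S.f x - S.f a| ≤ ε := by
          have := S.lip x a
          rw [hdist] at this
          exact this
        have h2 : |fold L (a:ℝ) - fold L (x:ℝ)| ≤ ε := by
          have := fold_lip hL ((a:ℝ)) ((x:ℝ))
          rw [abs_sub_comm] at hdist
          rw [hdist] at this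
          exact this
        calc |S.f x - fold L (x:ℝ)|
            = |(S.f x - S.f a) + (S.f a - fold L (x:ℝ))| := by ring_nf
          _ ≤ |S.f x - S.f a| + |S.f a - fold L (x:ℝ)| := abs_add_le _ _
          _ ≤ ε + ε := by
              refine add_le_add h1 ?_
              rw [hga]
              exact h2
          _ = 2*ε := by ring
      by_contra hne
      have hdpos : 0 < |S.f x - fold L (x:ℝ)| := abs_pos.2 (sub_ne_zero.2 hne)
      set d := |S.f x - fold L (x:ℝ)| with hd
      have := key (min (d/4) (t₀/2)) (lt_min (by linarith) (by linarith))
        (lt_of_le_of_lt (min_le_right _ _) (by linarith))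
      have h4 : min (d/4) (t₀/2) ≤ d/4 := min_le_left _ _
      linarith
  obtain ⟨η, hη, hstep⟩ := S.step hL ht₀0 heq
  obtain ⟨b, hbB, hblt⟩ := exists_lt_of_csInf_lt hBne
    (show sInf B < t₀ + η by rw [← ht₀]; linarith)
  obtain ⟨x, hxbad, hxe⟩ := hbB
  exact hxbad (hstep x (by rw [hxe]; exact le_of_lt hblt))


lemma GoodMap.endpoint0 (S : GoodMap L) (hL : 0 < L) :
    S.f ⟨0, by norm_num⟩ = 0 ∨ S.f ⟨0, by norm_num⟩ = L := by
  set e : Set.Icc (0:ℝ) 1 := ⟨0, by norm_num⟩ with he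
  by_contra hcon
  push_neg at hcon
  obtain ⟨hne0, hneL⟩ := hcon
  have h0 : 0 < S.f e := lt_of_le_of_ne (S.mem e).1 (Ne.symm hne0)
  have hLe : S.f e < L := lt_of_le_of_ne (S.mem e).2 hneL
  obtain ⟨ρ, hρ, hsign⟩ := S.signR e
  rcases hsign with hpos | hneg
  · obtain ⟨a, haball, halt⟩ := S.no_locmin hL e h0 hρ
    rcases eq_or_lt_of_le a.2.1 with heq | hgt
    · have : a = e := Subtype.ext heq.symm
      rw [this] at halt
      exact absurd halt (lt_irrefl _)
    · have hab : (a:ℝ) < (e:ℝ) + ρ := by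
        have : |(a:ℝ) - (e:ℝ)| = (a:ℝ) := by
          rw [show ((a:ℝ) - (e:ℝ)) = (a:ℝ) by show (a:ℝ) - 0 = (a:ℝ); ring,
            abs_of_pos hgt]
        rw [this] at haball
        show (a:ℝ) < 0 + ρ
        linarith
      have := hpos a hgt hab
      rw [this] at halt
      have : (0:ℝ) < (a:ℝ) - (e:ℝ) := by show (0:ℝ) < (a:ℝ) - 0; linarith
      linarith
  · obtain ⟨a, haball, hagt⟩ := S.no_locmax hL e hLe hρ
    rcases eq_or_lt_of_le a.2.1 with heq | hgt
    · have : a = e := Subtype.ext heq.symm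
      rw [this] at hagt
      exact absurd hagt (lt_irrefl _)
    · have hab : (a:ℝ) < (e:ℝ) + ρ := by
        have : |(a:ℝ) - (e:ℝ)| = (a:ℝ) := by
          rw [show ((a:ℝ) - (e:ℝ)) = (a:ℝ) by show (a:ℝ) - 0 = (a:ℝ); ring,
            abs_of_pos hgt]
        rw [this] at haball
        show (a:ℝ) < 0 + ρ
        linarith
      have := hneg a hgt hab
      rw [this] at hagt
      have : (0:ℝ) < (a:ℝ) - (e:ℝ) := by show (0:ℝ) < (a:ℝ) - 0; linarith
      linarith

lemma GoodMap.endpoint1 (S : GoodMap L) (hL : 0 < L) :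
    S.f ⟨1, by norm_num⟩ = 0 ∨ S.f ⟨1, by norm_num⟩ = L := by
  set e : Set.Icc (0:ℝ) 1 := ⟨1, by norm_num⟩ with he
  by_contra hcon
  push_neg at hcon
  obtain ⟨hne0, hneL⟩ := hcon
  have h0 : 0 < S.f e := lt_of_le_of_ne (S.mem e).1 (Ne.symm hne0)
  have hLe : S.f e < L := lt_of_le_of_ne (S.mem e).2 hneL
  obtain ⟨ρ, hρ, hsign⟩ := S.signL e
  rcases hsign with hpos | hneg
  · obtain ⟨a, haball, halt⟩ := S.no_locmin hL e h0 hρ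
    rcases eq_or_lt_of_le a.2.2 with hgt | heq
    · have : a = e := Subtype.ext hgt
      rw [this] at halt
      exact absurd halt (lt_irrefl _)
    · have hab : (e:ℝ) - ρ < (a:ℝ) := by
        have : |(a:ℝ) - (e:ℝ)| = (e:ℝ) - (a:ℝ) := by
          rw [abs_sub_comm, abs_of_pos (by show (0:ℝ) < 1 - (a:ℝ); linarith)]
        rw [this] at haball
        linarith
      have := hpos a heq hab
      rw [this] at halt
      have : (0:ℝ) < (e:ℝ) - (a:ℝ) := by show (0:ℝ) < 1 - (a:ℝ); linarith
      linarith
  · obtain ⟨a, haball, hagt⟩ := S.no_locmax hL e hLe hρ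
    rcases eq_or_lt_of_le a.2.2 with hgt | heq
    · have : a = e := Subtype.ext hgt
      rw [this] at hagt
      exact absurd hagt (lt_irrefl _)
    · have hab : (e:ℝ) - ρ < (a:ℝ) := by
        have : |(a:ℝ) - (e:ℝ)| = (e:ℝ) - (a:ℝ) := by
          rw [abs_sub_comm, abs_of_pos (by show (0:ℝ) < 1 - (a:ℝ); linarith)]
        rw [this] at haball
        linarith
      have := hneg a heq hab
      rw [this] at hagt
      have : (0:ℝ) < (e:ℝ) - (a:ℝ) := by show (0:ℝ) < 1 - (a:ℝ); linarith
      linarith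

lemma exists_k_of_int (hL : 0 < L) {n : ℤ} (hn : L * n = 1) : ∃ k : ℕ, 0 < k ∧ L = 1/k := by
  have hn0 : (0:ℝ) < (n:ℝ) := by nlinarith
  have hn0' : 0 < n := by exact_mod_cast hn0
  refine ⟨n.toNat, by omega, ?_⟩
  have hcast : ((n.toNat : ℕ) : ℝ) = (n:ℝ) := by
    have h' : (n.toNat : ℤ) = n := Int.toNat_of_nonneg (le_of_lt hn0')
    exact_mod_cast h'
  rw [hcast]
  field_simp
  linarith [hn]

lemma fold_one_k (hL : 0 < L) (h : fold L 1 = 0 ∨ fold L 1 = L) :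
    ∃ k : ℕ, 0 < k ∧ L = 1/k := by
  set c : ℤ := round ((1:ℝ)/(2*L)) with hc
  have hfold : fold L 1 = |1 - 2*L*c| := rfl
  rcases h with h | h
  · rw [h] at hfold
    have h1 : 1 - 2*L*(c:ℝ) = 0 := abs_eq_zero.1 hfold.symm
    exact exists_k_of_int hL (n := 2*c) (by push_cast; linarith)
  · rw [h] at hfold
    rcases abs_sub_cases hfold.symm with h' | h'
    · exact exists_k_of_int hL (n := 2*c + 1) (by push_cast; linarith)
    · exact exists_k_of_int hL (n := 2*c - 1) (by push_cast; linarith)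

def GoodMap.reflect (S : GoodMap L) : GoodMap L where
  f x := L - S.f x
  mem x := by
    have h1 := (S.mem x).1
    have h2 := (S.mem x).2
    constructor
    · show 0 ≤ L - S.f x
      linarith
    · show L - S.f x ≤ L
      linarith
  lip a b := by
    rw [show (L - S.f a) - (L - S.f b) = -(S.f a - S.f b) by ring, abs_neg]
    exact S.lip a b
  lift x y hy := by
    obtain ⟨x', h1, h2⟩ := S.lift x (L - y) ⟨by linarith [hy.2], by linarith [hy.1]⟩
    refine ⟨x', by show L - S.f x' = y; rw [h1]; ring, ?_⟩
    show |(x:ℝ) - (x':ℝ)| = |(L - S.f x) - y|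
    rw [h2, show S.f x - (L - y) = -((L - S.f x) - y) by ring, abs_neg]
  fin y := by
    have hset : {x : Set.Icc (0:ℝ) 1 | L - S.f x = y} = {x | S.f x = L - y} := by
      ext x
      constructor <;> intro h <;> (simp only [Set.mem_setOf_eq] at h ⊢; linarith)
    exact hset ▸ S.fin (L - y)


lemma lift_fold (hL : 0 < L) {k : ℕ} (hk : 0 < k) (hLk : L = 1/k)
    {t₀ z : ℝ} (ht₀ : t₀ ∈ Set.Icc (0:ℝ) 1) (hz : z ∈ Set.Icc 0 L) :
    ∃ t ∈ Set.Icc (0:ℝ) 1, fold L t = z ∧ |t₀ - t| = |fold L t₀ - z| := by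
  have hkR : (0:ℝ) < (k:ℝ) := by exact_mod_cast hk
  have hkL : L * (k:ℝ) = 1 := by rw [hLk]; field_simp
  have hk1 : (1:ℝ) ≤ (k:ℝ) := by exact_mod_cast hk
  have hL1 : L ≤ 1 := by nlinarith
  set c : ℤ := round (t₀/(2*L)) with hc
  have hfold : fold L t₀ = |t₀ - 2*L*c| := rfl
  have hc0 : 0 ≤ c := round_nonneg (div_nonneg ht₀.1 (by linarith))
  have hc0R : (0:ℝ) ≤ (c:ℝ) := by exact_mod_cast hc0
  have habs : |t₀ - 2*L*(c:ℝ)| ≤ L := by rw [← hfold]; exact fold_le hL t₀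
  have habs1 : t₀ - 2*L*(c:ℝ) ≤ L := le_trans (le_abs_self _) habs
  have habs2 : -L ≤ t₀ - 2*L*(c:ℝ) := by
    have := neg_abs_le (t₀ - 2*L*(c:ℝ))
    linarith [neg_le_neg habs]
  rcases le_or_gt (2*L*(c:ℝ)) t₀ with hcase | hcase
  · have hfv : fold L t₀ = t₀ - 2*L*c := by rw [hfold, abs_of_nonneg (by linarith)]
    have h2c : 2*(c:ℝ) ≤ (k:ℝ) := by
      have h1 : 2*L*(c:ℝ) ≤ L*(k:ℝ) := by rw [hkL]; linarith [ht₀.2]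
      nlinarith
    have h2cZ : 2*c ≤ (k:ℤ) := by exact_mod_cast h2c
    rcases eq_or_lt_of_le h2cZ with heqZ | hltZ
    · have h2Lc : 2*L*(c:ℝ) = 1 := by
        have : (2*(c:ℝ)) = (k:ℝ) := by exact_mod_cast heqZ
        nlinarith
      have ht1 : t₀ = 1 := le_antisymm ht₀.2 (by linarith)
      refine ⟨1 - z, ⟨by linarith [hz.2], by linarith [hz.1]⟩, ?_, ?_⟩
      · have hh : |(1 - z) - 2*L*(c:ℝ)| = z := by
          rw [h2Lc, show (1 - z) - 1 = -z by ring, abs_neg, abs_of_nonneg hz.1]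
        rw [fold_eq hL c (by rw [hh]; exact hz.2), hh]
      · rw [hfv, ht1, h2Lc, show (1:ℝ) - (1 - z) = -(1 - 1 - z) by ring, abs_neg,
          show (1:ℝ) - 1 - z = 1 - 1 - z from rfl]
    · have h2c1 : 2*(c:ℝ) + 1 ≤ (k:ℝ) := by exact_mod_cast (by omega : 2*c + 1 ≤ (k:ℤ))
      refine ⟨2*L*(c:ℝ) + z, ⟨by nlinarith [hz.1, hc0R], ?_⟩, ?_, ?_⟩
      · have h1 : 2*L*(c:ℝ) + z ≤ L*(2*(c:ℝ)+1) := by linarith [hz.2]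
        have h2 : L*(2*(c:ℝ)+1) ≤ L*(k:ℝ) := by nlinarith
        linarith [hkL]
      · have hh : |(2*L*(c:ℝ) + z) - 2*L*(c:ℝ)| = z := by
          rw [show (2*L*(c:ℝ) + z) - 2*L*(c:ℝ) = z by ring, abs_of_nonneg hz.1]
        rw [fold_eq hL c (by rw [hh]; exact hz.2), hh]
      · rw [hfv, show t₀ - (2*L*(c:ℝ) + z) = (t₀ - 2*L*(c:ℝ)) - z by ring]
  · have hfv : fold L t₀ = 2*L*c - t₀ := by
      rw [hfold, abs_of_neg (by linarith), neg_sub]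
    have hc1 : 1 ≤ c := by
      have hcR : (0:ℝ) < (c:ℝ) := by nlinarith [ht₀.1]
      have : 0 < c := by exact_mod_cast hcR
      omega
    have hc1R : (1:ℝ) ≤ (c:ℝ) := by exact_mod_cast hc1
    have h2c1 : 2*c - 1 ≤ (k:ℤ) := by
      have h1 : L*(2*(c:ℝ) - 1) ≤ t₀ := by linarith
      have h2 : L*(2*(c:ℝ) - 1) ≤ L*(k:ℝ) := by
        calc L*(2*(c:ℝ) - 1) ≤ t₀ := h1
          _ ≤ 1 := ht₀.2
          _ = L*(k:ℝ) := hkL.symm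
      have h3 : 2*(c:ℝ) - 1 ≤ (k:ℝ) := by nlinarith
      exact_mod_cast h3
    rcases (by omega : 2*c ≤ (k:ℤ) ∨ 2*c = (k:ℤ) + 1) with h2c | h2c
    · have h2cR : 2*(c:ℝ) ≤ (k:ℝ) := by exact_mod_cast h2c
      refine ⟨2*L*(c:ℝ) - z, ⟨?_, ?_⟩, ?_, ?_⟩
      · have : L*(2*(c:ℝ) - 1) ≥ L := by nlinarith
        linarith [hz.2]
      · have : 2*L*(c:ℝ) ≤ L*(k:ℝ) := by nlinarith
        linarith [hkL, hz.1]
      · have hh : |(2*L*(c:ℝ) - z) - 2*L*(c:ℝ)| = z := by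
          rw [show (2*L*(c:ℝ) - z) - 2*L*(c:ℝ) = -z by ring, abs_neg, abs_of_nonneg hz.1]
        rw [fold_eq hL c (by rw [hh]; exact hz.2), hh]
      · rw [hfv, show t₀ - (2*L*(c:ℝ) - z) = -((2*L*(c:ℝ) - t₀) - z) by ring, abs_neg]
    · -- 2c = k + 1 : t₀ = 2Lc - L = 1, fold t₀ = L
      have h2cR : 2*(c:ℝ) = (k:ℝ) + 1 := by exact_mod_cast h2c
      have hkc : (k:ℝ) = 2*(c:ℝ) - 1 := by linarith
      have h2 : 2*L*(c:ℝ) - L = 1 := by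
        calc 2*L*(c:ℝ) - L = L*(k:ℝ) := by rw [hkc]; ring
          _ = 1 := hkL
      have ht1 : t₀ = 1 := by
        have := habs2
        have := ht₀.2
        linarith
      have hfvL : fold L t₀ = L := by
        rw [hfv]
        linarith
      refine ⟨1 - L + z, ⟨by linarith [hz.1], by linarith [hz.2]⟩, ?_, ?_⟩
      · have hh : |(1 - L + z) - 2*L*((c:ℝ) - 1)| = z := by
          rw [show (1 - L + z) - 2*L*((c:ℝ) - 1) = (1 - L + z) - (2*L*(c:ℝ) - 2*L) by ring]
          rw [show (1 - L + z) - (2*L*(c:ℝ) - 2*L) = z by linarith]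
          exact abs_of_nonneg hz.1
        have hc1c : ((c - 1 : ℤ):ℝ) = (c:ℝ) - 1 := by push_cast; ring
        have key := fold_eq hL (c - 1) (t := 1 - L + z) (by rw [hc1c, hh]; exact hz.2)
        rw [key, hc1c]
        exact hh
      · rw [hfvL, ht1, show (1:ℝ) - (1 - L + z) = L - z by ring]


lemma fold_small (hL : 0 < L) {t : ℝ} (h0 : 0 ≤ t) (ht : t ≤ L) : fold L t = t := by
  have hh : |t - 2*L*((0:ℤ):ℝ)| = t := by
    push_cast
    rw [show t - 2*L*0 = t by ring, abs_of_nonneg h0]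
  rw [fold_eq hL 0 (by rw [hh]; exact ht), hh]

lemma fold_submetry (hL : 0 < L) {k : ℕ} (hk : 0 < k) (hLk : L = 1/k)
    (x : Set.Icc (0:ℝ) 1) {z : ℝ} (hz : z ∈ Set.Icc 0 L) :
    Metric.infDist x {x' : Set.Icc (0:ℝ) 1 | fold L (x':ℝ) = z} = |fold L (x:ℝ) - z| := by
  obtain ⟨t, ht, htf, htd⟩ := lift_fold hL hk hLk x.2 hz
  set x' : Set.Icc (0:ℝ) 1 := ⟨t, ht⟩ with hx'
  have hx'mem : x' ∈ {x' : Set.Icc (0:ℝ) 1 | fold L (x':ℝ) = z} := htf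
  refine le_antisymm ?_ ?_
  · calc Metric.infDist x {x' : Set.Icc (0:ℝ) 1 | fold L (x':ℝ) = z} ≤ dist x x' :=
        Metric.infDist_le_dist_of_mem hx'mem
      _ = |fold L (x:ℝ) - z| := by rw [Subtype.dist_eq, Real.dist_eq]; exact htd
  · refine le_infDist' ⟨x', hx'mem⟩ ?_
    intro y hy
    have hy' : fold L (y:ℝ) = z := hy
    rw [Subtype.dist_eq, Real.dist_eq]
    calc |fold L (x:ℝ) - z| = |fold L (x:ℝ) - fold L (y:ℝ)| := by rw [hy']
      _ ≤ |(x:ℝ) - (y:ℝ)| := fold_lip hL _ _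

lemma fiber_finite (hL : 0 < L) (hL1 : L ≤ 1) (z : ℝ) :
    {x : Set.Icc (0:ℝ) 1 | fold L (x:ℝ) = z}.Finite := by
  set N : ℤ := ⌈1/L⌉ with hN
  set T : Set ℝ := ((fun c : ℤ => 2*L*c + z) '' Set.Icc 0 N) ∪
    ((fun c : ℤ => 2*L*c - z) '' Set.Icc 0 N) with hT
  have hTfin : T.Finite :=
    ((Set.finite_Icc (0:ℤ) N).image _).union ((Set.finite_Icc (0:ℤ) N).image _)
  have hsub : {x : Set.Icc (0:ℝ) 1 | fold L (x:ℝ) = z} ⊆ Subtype.val ⁻¹' T := by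
    intro x hx
    have hx' : fold L (x:ℝ) = z := hx
    set c : ℤ := round ((x:ℝ)/(2*L)) with hc
    have hc0 : 0 ≤ c := round_nonneg (div_nonneg x.2.1 (by linarith))
    have hfold : fold L (x:ℝ) = |(x:ℝ) - 2*L*c| := rfl
    have habs : |(x:ℝ) - 2*L*(c:ℝ)| ≤ L := by rw [← hfold]; exact fold_le hL _
    have hcN : c ≤ N := by
      have h1 : 2*L*(c:ℝ) ≤ (x:ℝ) + L := by
        have h2 := neg_abs_le ((x:ℝ) - 2*L*(c:ℝ))
        linarith [habs]
      have h2 : (c:ℝ) ≤ 1/L := by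
        rw [le_div_iff₀ hL]
        nlinarith [x.2.2]
      have h3 : (c:ℝ) ≤ (N:ℝ) := le_trans h2 (Int.le_ceil _)
      exact_mod_cast h3
    have hor : (x:ℝ) = 2*L*c + z ∨ (x:ℝ) = 2*L*c - z := by
      have := hx' ▸ hfold.symm
      exact abs_sub_cases (hfold ▸ hx')
    rcases hor with h | h
    · exact Or.inl ⟨c, Set.mem_Icc.2 ⟨hc0, hcN⟩, h.symm⟩
    · exact Or.inr ⟨c, Set.mem_Icc.2 ⟨hc0, hcN⟩, h.symm⟩
  exact Set.Finite.subset (hTfin.preimage Subtype.val_injective.injOn) hsub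

end SubFold

open SubFold in
/-- A map `P : [0,1] → [0,L]` is a submetry with discrete (finite) fibers if and
only if `L = 1/k` for some positive integer `k` and `P` is the standard folding
map `x ↦ dist(x, 2L·ℤ)`, up to the isometry `t ↦ L - t` of the target. -/
theorem submetry_interval_discrete_fibers
    (L : ℝ) (hL : 0 < L)
    (P : Set.Icc (0 : ℝ) 1 → Set.Icc (0 : ℝ) L) :
    (Function.Surjective P ∧
      (∀ (x : Set.Icc (0 : ℝ) 1) (y : Set.Icc (0 : ℝ) L),
        dist (P x) y = Metric.infDist x (P ⁻¹' {y})) ∧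
      (∀ y : Set.Icc (0 : ℝ) L, (P ⁻¹' {y}).Finite)) ↔
    (∃ k : ℕ, 0 < k ∧ L = 1 / k ∧
      ((∀ x : Set.Icc (0 : ℝ) 1,
          (P x : ℝ) = Metric.infDist (x : ℝ) (Set.range fun m : ℤ => 2 * L * m)) ∨
       (∀ x : Set.Icc (0 : ℝ) 1,
          (P x : ℝ) = L - Metric.infDist (x : ℝ) (Set.range fun m : ℤ => 2 * L * m)))) := by
  constructor
  · rintro ⟨hsurj, hsub, hfin⟩
    -- build the GoodMap structure
    set S : GoodMap L :=
      { f := fun x => (P x : ℝ)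
        mem := fun x => (P x).2
        lip := by
          intro a b
          have hmem : b ∈ P ⁻¹' {P b} := rfl
          have h2 : Metric.infDist a (P ⁻¹' {P b}) ≤ dist a b :=
            Metric.infDist_le_dist_of_mem hmem
          have h := hsub a (P b)
          rw [Subtype.dist_eq, Real.dist_eq] at h
          rw [Subtype.dist_eq, Real.dist_eq] at h2
          show |((P a : ℝ)) - ((P b : ℝ))| ≤ |(a:ℝ) - (b:ℝ)|
          rw [h]
          exact h2
        lift := by
          intro x y hy
          set y' : Set.Icc (0:ℝ) L := ⟨y, hy⟩ with hy'
          obtain ⟨x₀, hx₀⟩ := hsurj y'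
          have hne : (P ⁻¹' {y'}).Nonempty := ⟨x₀, by simp [hx₀]⟩
          have hcpt : IsCompact (P ⁻¹' {y'}) := (hfin y').isCompact
          obtain ⟨x', hx'mem, hx'd⟩ := hcpt.exists_infDist_eq_dist hne x
          have hPx' : P x' = y' := hx'mem
          refine ⟨x', ?_, ?_⟩
          · show ((P x' : ℝ)) = y
            rw [hPx']
          have h := hsub x y'
          rw [hx'd] at h
          rw [Subtype.dist_eq, Real.dist_eq, Subtype.dist_eq, Real.dist_eq] at h
          exact h.symm
        fin := by
          intro v
          by_cases hv : v ∈ Set.Icc (0:ℝ) L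
          · have hset : {x | ((P x : ℝ)) = v} = P ⁻¹' {(⟨v, hv⟩ : Set.Icc (0:ℝ) L)} := by
              ext x
              simp [Set.mem_preimage, Set.mem_singleton_iff, Subtype.ext_iff]
            rw [hset]
            exact hfin _
          · have hset : {x | ((P x : ℝ)) = v} = (∅ : Set (Set.Icc (0:ℝ) 1)) := by
              ext x
              simp only [Set.mem_setOf_eq, Set.mem_empty_iff_false, iff_false]
              intro h
              exact hv (h ▸ (P x).2)
            rw [hset]
            exact Set.finite_empty } with hS
    have hSf : ∀ x, S.f x = (P x : ℝ) := fun x => rfl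
    have hend1 : S.f ⟨1, by norm_num⟩ = 0 ∨ S.f ⟨1, by norm_num⟩ = L := S.endpoint1 hL
    rcases S.endpoint0 hL with h00 | h0L
    · have hform : ∀ x, S.f x = fold L (x:ℝ) := S.master hL h00
      have hf1 : fold L 1 = 0 ∨ fold L 1 = L := by
        have := hform ⟨1, by norm_num⟩
        rw [this] at hend1
        exact hend1
      obtain ⟨k, hk, hLk⟩ := fold_one_k hL hf1
      refine ⟨k, hk, hLk, Or.inl ?_⟩
      intro x
      rw [fold_infDist hL]
      exact hform x
    · have h0ref : (S.reflect).f ⟨0, by norm_num⟩ = 0 := by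
        show L - S.f ⟨0, by norm_num⟩ = 0
        rw [h0L]
        ring
      have hform : ∀ x, (S.reflect).f x = fold L (x:ℝ) := (S.reflect).master hL h0ref
      have hform' : ∀ x, S.f x = L - fold L (x:ℝ) := by
        intro x
        have := hform x
        show S.f x = L - fold L (x:ℝ)
        have h2 : L - S.f x = fold L (x:ℝ) := this
        linarith
      have hf1 : fold L 1 = 0 ∨ fold L 1 = L := by
        have h2 := hform' ⟨1, by norm_num⟩
        rcases hend1 with h | h <;> rw [h2] at h
        · right; linarith
        · left; linarith
      obtain ⟨k, hk, hLk⟩ := fold_one_k hL hf1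
      refine ⟨k, hk, hLk, Or.inr ?_⟩
      intro x
      rw [fold_infDist hL]
      exact hform' x
  · rintro ⟨k, hk, hLk, hform | hform⟩ <;>
      simp only [fold_infDist hL] at hform
    · -- P x = fold
      have hkR : (0:ℝ) < (k:ℝ) := by exact_mod_cast hk
      have hk1 : (1:ℝ) ≤ (k:ℝ) := by exact_mod_cast hk
      have hL1 : L ≤ 1 := by
        rw [hLk, div_le_one hkR]
        exact hk1
      refine ⟨?_, ?_, ?_⟩
      · intro y
        refine ⟨⟨(y:ℝ), ⟨y.2.1, le_trans y.2.2 hL1⟩⟩, ?_⟩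
        apply Subtype.ext
        rw [hform]
        exact fold_small hL y.2.1 y.2.2
      · intro x y
        have hset : P ⁻¹' {y} = {x' : Set.Icc (0:ℝ) 1 | fold L (x':ℝ) = (y:ℝ)} := by
          ext x'
          simp only [Set.mem_preimage, Set.mem_singleton_iff, Set.mem_setOf_eq,
            Subtype.ext_iff, hform x']
        rw [hset, fold_submetry hL hk hLk x y.2, Subtype.dist_eq, Real.dist_eq, hform x]
      · intro y
        have hset : P ⁻¹' {y} = {x' : Set.Icc (0:ℝ) 1 | fold L (x':ℝ) = (y:ℝ)} := by
          ext x'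
          simp only [Set.mem_preimage, Set.mem_singleton_iff, Set.mem_setOf_eq,
            Subtype.ext_iff, hform x']
        rw [hset]
        exact fiber_finite hL hL1 (y:ℝ)
    · -- P x = L - fold
      have hkR : (0:ℝ) < (k:ℝ) := by exact_mod_cast hk
      have hk1 : (1:ℝ) ≤ (k:ℝ) := by exact_mod_cast hk
      have hL1 : L ≤ 1 := by
        rw [hLk, div_le_one hkR]
        exact hk1
      have hzy : ∀ y : Set.Icc (0:ℝ) L, (L - (y:ℝ)) ∈ Set.Icc (0:ℝ) L :=
        fun y => ⟨by linarith [y.2.2], by linarith [y.2.1]⟩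
      have hset : ∀ y : Set.Icc (0:ℝ) L,
          P ⁻¹' {y} = {x' : Set.Icc (0:ℝ) 1 | fold L (x':ℝ) = L - (y:ℝ)} := by
        intro y
        ext x'
        simp only [Set.mem_preimage, Set.mem_singleton_iff, Set.mem_setOf_eq, Subtype.ext_iff,
          hform x']
        constructor <;> intro h <;> linarith
      refine ⟨?_, ?_, ?_⟩
      · intro y
        refine ⟨⟨L - (y:ℝ), ⟨by linarith [y.2.2], le_trans (by linarith [y.2.1]) hL1⟩⟩, ?_⟩
        apply Subtype.ext
        rw [hform]
        have : fold L (L - (y:ℝ)) = L - (y:ℝ) :=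
          fold_small hL (by linarith [y.2.2]) (by linarith [y.2.1])
        rw [this]
        ring
      · intro x y
        rw [hset y, fold_submetry hL hk hLk x (hzy y), Subtype.dist_eq, Real.dist_eq, hform x,
          show (L - fold L (x:ℝ)) - (y:ℝ) = -(fold L (x:ℝ) - (L - (y:ℝ))) by ring, abs_neg]
      · intro y
        rw [hset y]
        exact fiber_finite hL hL1 _
end
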